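/- arXiv:2605.13326 — 9 statements merged into one kernel-verified Lean document; each statement's English description precedes it below -/
import Mathlib

section
/- Let U be uniformly distributed on a bounded interval [l, u] with l < u. Then min_{s ∈ ℝ} Var|U − s| = Var(U)/4, and the minimum is attained at the midpoint s = (l + u)/2. In particular the folding ratio of U equals 1/4. -/
/-!
Outside `[l, u]` the fold `|U - s|` is `±(U - s)` almost surely, so its variance is
`Var U = (u - l)² / 12`. For `s ∈ [l, u]`, with `a = s - l` and `b = u - s`, the first two
moments of `|U - s|` are `(a² + b²) / (2(a + b))` and `(a³ + b³) / (3(a + b))`, which gives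
`Var |U - s| = Var U / 4 + (a² + b² + 6ab)(a - b)² / (16(a + b)²)`:
the excess is nonnegative and vanishes exactly at the midpoint `a = b`.
-/

open MeasureTheory ProbabilityTheory intervalIntegral Set

lemma variance_abs_sub_of_ae_le {Ω : Type*} [MeasurableSpace Ω] {μ : Measure Ω}
    [IsProbabilityMeasure μ] {X : Ω → ℝ} (hX : AEStronglyMeasurable X μ) {s : ℝ}
    (h : ∀ᵐ ω ∂μ, s ≤ X ω) : Var[fun ω => |X ω - s|; μ] = Var[X; μ] := by
  rw [variance_congr (h.mono fun ω hω => abs_of_nonneg (sub_nonneg.2 hω)),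
    variance_sub_const hX]

lemma variance_abs_sub_of_ae_ge {Ω : Type*} [MeasurableSpace Ω] {μ : Measure Ω}
    [IsProbabilityMeasure μ] {X : Ω → ℝ} (hX : AEStronglyMeasurable X μ) {s : ℝ}
    (h : ∀ᵐ ω ∂μ, X ω ≤ s) : Var[fun ω => |X ω - s|; μ] = Var[X; μ] := by
  rw [variance_congr (h.mono fun ω hω => abs_of_nonpos (sub_nonpos.2 hω)), variance_fun_neg,
    variance_sub_const hX]

lemma integral_abs_sub_of_mem_Icc {l u s : ℝ} (hs : s ∈ Icc l u) :
    ∫ x in l..u, |x - s| = ((s - l) ^ 2 + (u - s) ^ 2) / 2 := by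
  have hleft : ∫ x in l..s, |x - s| = ∫ x in l..s, (s - x) :=
    integral_congr fun x hx => by
      rw [uIcc_of_le hs.1] at hx
      rw [abs_sub_comm, abs_of_nonneg (sub_nonneg.2 hx.2)]
  have hright : ∫ x in s..u, |x - s| = ∫ x in s..u, (x - s) :=
    integral_congr fun x hx => by
      rw [uIcc_of_le hs.2] at hx
      rw [abs_of_nonneg (sub_nonneg.2 hx.1)]
  have hcont : Continuous fun x => |x - s| := by fun_prop
  rw [← integral_add_adjacent_intervals (hcont.intervalIntegrable l s)
    (hcont.intervalIntegrable s u), hleft, hright]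
  simp only [integral_comp_sub_left fun x => x, integral_comp_sub_right fun x => x, integral_id]
  ring

noncomputable def uniformIcc (l u : ℝ) : Measure ℝ :=
  (ENNReal.ofReal (u - l))⁻¹ • volume.restrict (Icc l u)

section Uniform

variable {l u : ℝ}

lemma isProbabilityMeasure_uniformIcc (hlu : l < u) : IsProbabilityMeasure (uniformIcc l u) := by
  refine ⟨?_⟩
  rw [uniformIcc, Measure.smul_apply, Measure.restrict_apply_univ, Real.volume_Icc, smul_eq_mul,
    ENNReal.inv_mul_cancel (ENNReal.ofReal_pos.2 (sub_pos.2 hlu)).ne' ENNReal.ofReal_ne_top]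

lemma ae_mem_Icc_uniformIcc : ∀ᵐ x ∂uniformIcc l u, x ∈ Icc l u :=
  Measure.ae_smul_measure (ae_restrict_mem measurableSet_Icc) _

lemma integral_uniformIcc (hlu : l ≤ u) (g : ℝ → ℝ) :
    ∫ x, g x ∂uniformIcc l u = (∫ x in l..u, g x) / (u - l) := by
  rw [uniformIcc, MeasureTheory.integral_smul_measure, integral_of_le hlu,
    ← integral_Icc_eq_integral_Ioc, ENNReal.toReal_inv, ENNReal.toReal_ofReal (sub_nonneg.2 hlu),
    smul_eq_mul, inv_mul_eq_div]

lemma variance_uniformIcc (hlu : l < u) {f : ℝ → ℝ} (hf : Continuous f) :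
    Var[f; uniformIcc l u]
      = (∫ x in l..u, f x ^ 2) / (u - l) - ((∫ x in l..u, f x) / (u - l)) ^ 2 := by
  have := isProbabilityMeasure_uniformIcc hlu
  obtain ⟨x₁, -, hmin⟩ :=
    isCompact_Icc.exists_isMinOn (nonempty_Icc.2 hlu.le) hf.continuousOn
  obtain ⟨x₂, -, hmax⟩ :=
    isCompact_Icc.exists_isMaxOn (nonempty_Icc.2 hlu.le) hf.continuousOn
  have hf2 : MemLp f 2 (uniformIcc l u) :=
    memLp_of_bounded (ae_mem_Icc_uniformIcc.mono fun x hx => ⟨hmin hx, hmax hx⟩)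
      hf.aestronglyMeasurable 2
  rw [variance_eq_sub hf2, ← integral_uniformIcc hlu.le, ← integral_uniformIcc hlu.le]
  rfl

lemma variance_id_uniformIcc (hlu : l < u) :
    Var[fun x => x; uniformIcc l u] = (u - l) ^ 2 / 12 := by
  have : u - l ≠ 0 := (sub_pos.2 hlu).ne'
  rw [variance_uniformIcc hlu (f := fun x => x) continuous_id, integral_id, integral_pow]
  field_simp
  ring

lemma variance_abs_sub_uniformIcc_of_mem (hlu : l < u) {s : ℝ} (hs : s ∈ Icc l u) :
    Var[fun x => |x - s|; uniformIcc l u] = (u - l) ^ 2 / 48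
      + ((s - l) ^ 2 + (u - s) ^ 2 + 6 * (s - l) * (u - s)) * (2 * s - l - u) ^ 2
        / (16 * (u - l) ^ 2) := by
  have : u - l ≠ 0 := (sub_pos.2 hlu).ne'
  rw [variance_uniformIcc hlu (by fun_prop), integral_abs_sub_of_mem_Icc hs]
  simp only [sq_abs]
  rw [integral_comp_sub_right (fun x => x ^ 2), integral_pow]
  field_simp
  ring

lemma variance_id_uniformIcc_div_four_le (hlu : l < u) (s : ℝ) :
    Var[fun x => x; uniformIcc l u] / 4 ≤ Var[fun x => |x - s|; uniformIcc l u] := by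
  have := isProbabilityMeasure_uniformIcc hlu
  have hmeas : AEStronglyMeasurable (fun x : ℝ => x) (uniformIcc l u) := by fun_prop
  have hVar := variance_id_uniformIcc hlu
  rcases le_or_gt s l with hsl | hls
  · rw [variance_abs_sub_of_ae_le hmeas (ae_mem_Icc_uniformIcc.mono fun x hx => hsl.trans hx.1)]
    linarith [sq_nonneg (u - l)]
  rcases le_or_gt u s with hus | hsu
  · rw [variance_abs_sub_of_ae_ge hmeas (ae_mem_Icc_uniformIcc.mono fun x hx => hx.2.trans hus)]
    linarith [sq_nonneg (u - l)]
  rw [variance_abs_sub_uniformIcc_of_mem hlu ⟨hls.le, hsu.le⟩, hVar]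
  have hexcess : 0 ≤ ((s - l) ^ 2 + (u - s) ^ 2 + 6 * (s - l) * (u - s)) * (2 * s - l - u) ^ 2
      / (16 * (u - l) ^ 2) := by
    have : 0 ≤ (s - l) * (u - s) := mul_nonneg (sub_nonneg.2 hls.le) (sub_nonneg.2 hsu.le)
    positivity
  linarith

end Uniform

/-- Let `U` be uniformly distributed on a bounded interval `[l, u]`, `l < u`
(i.e. its law `P` is the normalized restriction of Lebesgue measure to `[l, u]`). Then
`min_{s ∈ ℝ} Var |U - s| = Var U / 4`, the minimum being attained at the midpoint
`s = (l + u) / 2`; in particular the folding ratio of `U` equals `1/4`. -/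
theorem stmt_3 (l u : ℝ) (hlu : l < u)
    (P : Measure ℝ)
    (hP : P = (ENNReal.ofReal (u - l))⁻¹ • volume.restrict (Set.Icc l u)) :
    (∀ s : ℝ, variance (fun x => x) P / 4 ≤ variance (fun x => |x - s|) P) ∧
    variance (fun x => |x - (l + u) / 2|) P = variance (fun x => x) P / 4 ∧
    (⨅ s : ℝ, variance (fun x => |x - s|) P) / variance (fun x => x) P = 1 / 4 := by
  obtain rfl : P = uniformIcc l u := hP
  have hmin := variance_id_uniformIcc_div_four_le hlu
  have hmid : Var[fun x => |x - (l + u) / 2|; uniformIcc l u]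
      = Var[fun x => x; uniformIcc l u] / 4 := by
    rw [variance_abs_sub_uniformIcc_of_mem hlu ⟨by linarith, by linarith⟩,
      variance_id_uniformIcc hlu]
    ring
  have hinf :
      ⨅ s, Var[fun x => |x - s|; uniformIcc l u] = Var[fun x => x; uniformIcc l u] / 4 :=
    IsGLB.ciInf_eq (IsLeast.isGLB ⟨⟨_, hmid⟩, forall_mem_range.2 hmin⟩)
  refine ⟨hmin, hmid, ?_⟩
  have : u - l ≠ 0 := (sub_pos.2 hlu).ne'
  rw [hinf, variance_id_uniformIcc hlu]
  field_simp
end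

section
/- Let X be a standardized k-Dirac mixture with k > 1. Then for every s ∈ ℝ, Var|X − s| = 1 + s² − (E|X − s|)². Moreover, for every g ∈ {1,…,k−1} and every s ∈ [μ_g, μ_{g+1}], Var|X − s| = 4 η_g (1 − η_g) s² + 4 (2η_g − 1) α_g s + 1 − 4 α_g², which also equals 1 − 4 η_g (1 − η_g) (α_g/η_g − s)(α_g/(1 − η_g) + s). -/
open MeasureTheory ProbabilityTheory Finset

/-!
Since `E X = 0` and `E X² = 1`, `E (X - s)² = 1 + s²`, which is the first identity. For
`s ∈ [μ_g, μ_{g+1}]` the atoms left of `s` are exactly `μ_1, …, μ_g`, and the tail sums are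
`Σ_{i>g} ε_i = 1 - η_g` and `Σ_{i>g} ε_i μ_i = -α_g`; hence `E|X - s| = (2η_g - 1) s - 2α_g`, and
substituting into the first identity gives the quadratic in `s`. As `0 < η_g < 1`, it factors.
-/

section DiracMixture

variable {α ι : Type*} [MeasurableSpace α] {t : Finset ι} {w : ι → ℝ} {x : ι → α}

lemma isProbabilityMeasure_sum_smul_dirac (hw : ∀ i ∈ t, 0 ≤ w i) (hsum : ∑ i ∈ t, w i = 1) :
    IsProbabilityMeasure (∑ i ∈ t, ENNReal.ofReal (w i) • Measure.dirac (x i)) := by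
  constructor
  simp only [Measure.finsetSum_apply, Measure.smul_apply, measure_univ, smul_eq_mul, mul_one]
  rw [← ENNReal.ofReal_sum_of_nonneg hw, hsum, ENNReal.ofReal_one]

variable [MeasurableSingletonClass α]

lemma integrable_sum_smul_dirac (f : α → ℝ) :
    Integrable f (∑ i ∈ t, ENNReal.ofReal (w i) • Measure.dirac (x i)) :=
  integrable_finsetSum_measure.2 fun _ _ =>
    (integrable_dirac enorm_lt_top).smul_measure ENNReal.ofReal_ne_top

lemma integral_sum_smul_dirac (hw : ∀ i ∈ t, 0 ≤ w i) (f : α → ℝ) :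
    ∫ a, f a ∂(∑ i ∈ t, ENNReal.ofReal (w i) • Measure.dirac (x i)) = ∑ i ∈ t, w i * f (x i) := by
  rw [integral_finsetSum_measure fun _ _ =>
    (integrable_dirac enorm_lt_top).smul_measure ENNReal.ofReal_ne_top]
  refine sum_congr rfl fun i hi => ?_
  rw [integral_smul_measure, integral_dirac, ENNReal.toReal_ofReal (hw i hi), smul_eq_mul]

lemma memLp_two_sum_smul_dirac (f : α → ℝ) :
    MemLp f 2 (∑ i ∈ t, ENNReal.ofReal (w i) • Measure.dirac (x i)) :=
  (memLp_two_iff_integrable_sq (integrable_sum_smul_dirac f).aestronglyMeasurable).2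
    (integrable_sum_smul_dirac _)

end DiracMixture

lemma integral_sub_sq_of_standardized {P : Measure ℝ} [IsProbabilityMeasure P]
    (hX : MemLp (fun x => x) 2 P) (hmean : ∫ x, x ∂P = 0) (hm2 : ∫ x, x ^ 2 ∂P = 1) (s : ℝ) :
    ∫ x, (x - s) ^ 2 ∂P = 1 + s ^ 2 := by
  have h1 : Integrable (fun x : ℝ => x ^ 2) P := hX.integrable_sq
  have h2 : Integrable (fun x : ℝ => 2 * s * x) P := (hX.integrable one_le_two).const_mul _
  have h12 : Integrable (fun x : ℝ => x ^ 2 - 2 * s * x) P := h1.sub h2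
  calc ∫ x, (x - s) ^ 2 ∂P = ∫ x, (x ^ 2 - 2 * s * x + s ^ 2) ∂P := by congr with x; ring
    _ = 1 + s ^ 2 := by
      rw [integral_add h12 (integrable_const _), integral_sub h1 h2, integral_const_mul,
        hmean, hm2]
      simp

lemma variance_abs_sub_of_standardized {P : Measure ℝ} [IsProbabilityMeasure P]
    (hX : MemLp (fun x => x) 2 P) (hmean : ∫ x, x ∂P = 0) (hm2 : ∫ x, x ^ 2 ∂P = 1) (s : ℝ) :
    variance (fun x => |x - s|) P = 1 + s ^ 2 - (∫ x, |x - s| ∂P) ^ 2 := by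
  have hL2 : MemLp (fun x => |x - s|) 2 P := (hX.sub (memLp_const s)).abs
  rw [variance_eq_sub hL2]
  simp only [Pi.pow_apply, sq_abs, integral_sub_sq_of_standardized hX hmean hm2]

lemma sum_Icc_one_add_sum_Icc_succ {M : Type*} [AddCommMonoid M] (f : ℕ → M) {g k : ℕ}
    (hgk : g ≤ k) : ∑ i ∈ Icc 1 g, f i + ∑ i ∈ Icc (g + 1) k, f i = ∑ i ∈ Icc 1 k, f i := by
  simpa only [← Icc_add_one_left_eq_Ioc, zero_add] using sum_Ioc_consecutive f g.zero_le hgk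

section PartialSums

variable {ε μ : ℕ → ℝ} {g k : ℕ}

lemma sum_Icc_mem_Ioo_of_pos (hε : ∀ i ∈ Icc 1 k, 0 < ε i) (hsum : ∑ i ∈ Icc 1 k, ε i = 1)
    (hg : g ∈ Ico 1 k) : ∑ i ∈ Icc 1 g, ε i ∈ Set.Ioo 0 1 := by
  obtain ⟨hg1, hgk⟩ := mem_Ico.1 hg
  have hhead : 0 < ∑ i ∈ Icc 1 g, ε i :=
    sum_pos (fun i hi => hε i (Icc_subset_Icc_right hgk.le hi)) (nonempty_Icc.2 hg1)
  have htail : 0 < ∑ i ∈ Icc (g + 1) k, ε i :=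
    sum_pos (fun i hi => hε i (Icc_subset_Icc_left (by omega) hi)) (nonempty_Icc.2 hgk)
  have := sum_Icc_one_add_sum_Icc_succ ε hgk.le
  exact ⟨hhead, by linarith⟩

lemma sum_mul_abs_sub_eq_sum_add_sum (hgk : g ≤ k) (hμ : MonotoneOn μ (Set.Icc 1 k)) {s : ℝ}
    (hs : s ∈ Set.Icc (μ g) (μ (g + 1))) :
    ∑ i ∈ Icc 1 k, ε i * |μ i - s| =
      ∑ i ∈ Icc 1 g, ε i * (s - μ i) + ∑ i ∈ Icc (g + 1) k, ε i * (μ i - s) := by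
  rw [← sum_Icc_one_add_sum_Icc_succ _ hgk]
  congr 1 <;> refine sum_congr rfl fun i hi => ?_ <;> obtain ⟨hi1, hi2⟩ := mem_Icc.1 hi
  · have : μ i ≤ μ g := hμ ⟨hi1, hi2.trans hgk⟩ ⟨hi1.trans hi2, hgk⟩ hi2
    rw [abs_of_nonpos (by linarith [hs.1]), neg_sub]
  · have : μ (g + 1) ≤ μ i := hμ ⟨by omega, hi1.trans hi2⟩ ⟨by omega, hi2⟩ hi1
    rw [abs_of_nonneg (by linarith [hs.2])]

lemma sum_mul_abs_sub_of_mem_Icc (hgk : g ≤ k) (hμ : MonotoneOn μ (Set.Icc 1 k)) {s : ℝ}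
    (hs : s ∈ Set.Icc (μ g) (μ (g + 1))) (hsum : ∑ i ∈ Icc 1 k, ε i = 1)
    (hmean : ∑ i ∈ Icc 1 k, ε i * μ i = 0) :
    ∑ i ∈ Icc 1 k, ε i * |μ i - s| =
      (2 * ∑ i ∈ Icc 1 g, ε i - 1) * s - 2 * ∑ i ∈ Icc 1 g, ε i * μ i := by
  have htail : ∑ i ∈ Icc (g + 1) k, ε i = 1 - ∑ i ∈ Icc 1 g, ε i := by
    rw [← hsum, ← sum_Icc_one_add_sum_Icc_succ ε hgk, add_sub_cancel_left]
  have htail' : ∑ i ∈ Icc (g + 1) k, ε i * μ i = -∑ i ∈ Icc 1 g, ε i * μ i := by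
    rw [eq_neg_iff_add_eq_zero, add_comm, sum_Icc_one_add_sum_Icc_succ _ hgk, hmean]
  rw [sum_mul_abs_sub_eq_sum_add_sum hgk hμ hs]
  simp only [mul_sub, sum_sub_distrib, ← sum_mul, htail, htail']
  ring

end PartialSums

lemma quadratic_eq_one_sub_factored {η α s : ℝ} (hη : η ≠ 0) (hη' : 1 - η ≠ 0) :
    4 * η * (1 - η) * s ^ 2 + 4 * (2 * η - 1) * α * s + 1 - 4 * α ^ 2 =
      1 - 4 * η * (1 - η) * (α / η - s) * (α / (1 - η) + s) := by
  field_simp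
  ring

theorem stmt_4_general (k : ℕ) (ε μ : ℕ → ℝ)
    (hε : ∀ i ∈ Finset.Icc 1 k, 0 < ε i)
    (hsum : ∑ i ∈ Finset.Icc 1 k, ε i = 1)
    (hord : ∀ i ∈ Finset.Ico 1 k, μ i < μ (i + 1))
    (P : Measure ℝ)
    (hP : P = ∑ i ∈ Finset.Icc 1 k, ENNReal.ofReal (ε i) • Measure.dirac (μ i))
    (hmean : ∫ x, x ∂P = 0) (hm2 : ∫ x, x ^ 2 ∂P = 1) :
    (∀ s : ℝ, variance (fun x => |x - s|) P = 1 + s ^ 2 - (∫ x, |x - s| ∂P) ^ 2) ∧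
    ∀ g ∈ Finset.Ico 1 k, ∀ s ∈ Set.Icc (μ g) (μ (g + 1)),
      variance (fun x => |x - s|) P =
        4 * (∑ i ∈ Finset.Icc 1 g, ε i) * (1 - ∑ i ∈ Finset.Icc 1 g, ε i) * s ^ 2
          + 4 * (2 * (∑ i ∈ Finset.Icc 1 g, ε i) - 1) * (∑ i ∈ Finset.Icc 1 g, ε i * μ i) * s
          + 1 - 4 * (∑ i ∈ Finset.Icc 1 g, ε i * μ i) ^ 2 ∧
      variance (fun x => |x - s|) P =
        1 - 4 * (∑ i ∈ Finset.Icc 1 g, ε i) * (1 - ∑ i ∈ Finset.Icc 1 g, ε i) *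
          ((∑ i ∈ Finset.Icc 1 g, ε i * μ i) / (∑ i ∈ Finset.Icc 1 g, ε i) - s) *
          ((∑ i ∈ Finset.Icc 1 g, ε i * μ i) / (1 - ∑ i ∈ Finset.Icc 1 g, ε i) + s) := by
  have hε0 : ∀ i ∈ Icc 1 k, 0 ≤ ε i := fun i hi => (hε i hi).le
  have hint : ∀ f : ℝ → ℝ, ∫ x, f x ∂P = ∑ i ∈ Icc 1 k, ε i * f (μ i) := fun f => by
    rw [hP, integral_sum_smul_dirac hε0]
  have : IsProbabilityMeasure P := hP ▸ isProbabilityMeasure_sum_smul_dirac hε0 hsum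
  have hvar := variance_abs_sub_of_standardized (hP ▸ memLp_two_sum_smul_dirac _) hmean hm2
  refine ⟨hvar, fun g hg s hs => ?_⟩
  have hμ : MonotoneOn μ (Set.Icc 1 k) :=
    (strictMonoOn_of_lt_add_one Set.ordConnected_Icc fun i _ hi hi' =>
      hord i (mem_Ico.2 ⟨hi.1, hi'.2⟩)).monotoneOn
  have hE : ∫ x, |x - s| ∂P =
      (2 * ∑ i ∈ Icc 1 g, ε i - 1) * s - 2 * ∑ i ∈ Icc 1 g, ε i * μ i := by
    rw [hint, sum_mul_abs_sub_of_mem_Icc (mem_Ico.1 hg).2.le hμ hs hsum (hint id ▸ hmean)]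
  obtain ⟨hη0, hη1⟩ := sum_Icc_mem_Ioo_of_pos hε hsum hg
  have hquad := hvar s
  rw [hE] at hquad
  refine ⟨by rw [hquad]; ring, ?_⟩
  rw [hquad, ← quadratic_eq_one_sub_factored hη0.ne' (sub_ne_zero.2 hη1.ne')]
  ring

/-- For a standardized `k`-Dirac mixture `X` (law `P = Σᵢ εᵢ δ_{μᵢ}`,
`εᵢ > 0`, `Σ εᵢ = 1`, `μ₁ < ⋯ < μ_k`, `E[X] = 0`, `E[X²] = 1`), for every `s ∈ ℝ`,
`Var |X - s| = 1 + s² - (E |X - s|)²`, and for every `g ∈ {1, …, k-1}` and every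
`s ∈ [μ_g, μ_{g+1}]`,
`Var |X - s| = 4 η_g (1 - η_g) s² + 4 (2 η_g - 1) α_g s + 1 - 4 α_g²
             = 1 - 4 η_g (1 - η_g) (α_g / η_g - s) (α_g / (1 - η_g) + s)`,
where `α_g = Σ_{i ≤ g} εᵢ μᵢ` and `η_g = Σ_{i ≤ g} εᵢ`. -/
theorem stmt_4 (k : ℕ) (hk : 1 < k) (ε μ : ℕ → ℝ)
    (hε : ∀ i ∈ Finset.Icc 1 k, 0 < ε i)
    (hsum : ∑ i ∈ Finset.Icc 1 k, ε i = 1)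
    (hord : ∀ i ∈ Finset.Ico 1 k, μ i < μ (i + 1))
    (P : Measure ℝ)
    (hP : P = ∑ i ∈ Finset.Icc 1 k, ENNReal.ofReal (ε i) • Measure.dirac (μ i))
    (hmean : ∫ x, x ∂P = 0) (hm2 : ∫ x, x ^ 2 ∂P = 1) :
    (∀ s : ℝ, variance (fun x => |x - s|) P = 1 + s ^ 2 - (∫ x, |x - s| ∂P) ^ 2) ∧
    ∀ g ∈ Finset.Ico 1 k, ∀ s ∈ Set.Icc (μ g) (μ (g + 1)),
      variance (fun x => |x - s|) P =
        4 * (∑ i ∈ Finset.Icc 1 g, ε i) * (1 - ∑ i ∈ Finset.Icc 1 g, ε i) * s ^ 2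
          + 4 * (2 * (∑ i ∈ Finset.Icc 1 g, ε i) - 1) * (∑ i ∈ Finset.Icc 1 g, ε i * μ i) * s
          + 1 - 4 * (∑ i ∈ Finset.Icc 1 g, ε i * μ i) ^ 2 ∧
      variance (fun x => |x - s|) P =
        1 - 4 * (∑ i ∈ Finset.Icc 1 g, ε i) * (1 - ∑ i ∈ Finset.Icc 1 g, ε i) *
          ((∑ i ∈ Finset.Icc 1 g, ε i * μ i) / (∑ i ∈ Finset.Icc 1 g, ε i) - s) *
          ((∑ i ∈ Finset.Icc 1 g, ε i * μ i) / (1 - ∑ i ∈ Finset.Icc 1 g, ε i) + s) :=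
  stmt_4_general k ε μ hε hsum hord P hP hmean hm2
end

section
/- Let X be a standardized k-Dirac mixture with k > 2, and for g ∈ {1,…,k−1} set s_g = (α_g/2)(1/η_g − 1/(1−η_g)). Then the finite sequence (s_g) is strictly increasing: s_g < s_{g+1} for all g ∈ {1,…,k−2}. -/
open MeasureTheory ProbabilityTheory

set_option maxHeartbeats 1000000

/-- For a standardized `k`-Dirac mixture with `k > 2`, the finite sequence
`s_g = (α_g / 2) (1 / η_g - 1 / (1 - η_g))`, `g ∈ {1, …, k-1}`, is strictly increasing:
`s_g < s_{g+1}` for all `g ∈ {1, …, k-2}`. -/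
theorem stmt_6 (k : ℕ) (hk : 2 < k) (ε μ : ℕ → ℝ)
    (hε : ∀ i ∈ Finset.Icc 1 k, 0 < ε i)
    (hsum : ∑ i ∈ Finset.Icc 1 k, ε i = 1)
    (hord : ∀ i ∈ Finset.Ico 1 k, μ i < μ (i + 1))
    (P : Measure ℝ)
    (hP : P = ∑ i ∈ Finset.Icc 1 k, ENNReal.ofReal (ε i) • Measure.dirac (μ i))
    (hmean : ∫ x, x ∂P = 0) (hm2 : ∫ x, x ^ 2 ∂P = 1) :
    ∀ g, 1 ≤ g → g + 1 < k →
      (∑ i ∈ Finset.Icc 1 g, ε i * μ i) / 2 *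
        (1 / (∑ i ∈ Finset.Icc 1 g, ε i) - 1 / (1 - ∑ i ∈ Finset.Icc 1 g, ε i)) <
      (∑ i ∈ Finset.Icc 1 (g + 1), ε i * μ i) / 2 *
        (1 / (∑ i ∈ Finset.Icc 1 (g + 1), ε i) - 1 / (1 - ∑ i ∈ Finset.Icc 1 (g + 1), ε i)) := by
  -- strict monotonicity of μ on {1,…,k}
  have hmono : ∀ j, ∀ i, 1 ≤ i → i < j → j ≤ k → μ i < μ j := by
    intro j
    induction j with
    | zero => omega
    | succ n ih =>
      intro i h1 h2 h3
      have hn1 : 1 ≤ n := by omega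
      have hnk : μ n < μ (n + 1) := hord n (by simp [Finset.mem_Ico]; omega)
      rcases eq_or_lt_of_le (Nat.lt_succ_iff.mp h2) with h | h
      · rw [h]; exact hnk
      · exact lt_trans (ih i h1 h (by omega)) hnk
  -- the mean as a sum
  have hmean' : ∑ i ∈ Finset.Icc 1 k, ε i * μ i = 0 := by
    have hint : ∀ i ∈ Finset.Icc 1 k,
        Integrable (fun x : ℝ => x) (ENNReal.ofReal (ε i) • Measure.dirac (μ i)) := by
      intro i hi
      have : Integrable (fun x : ℝ => x) (Measure.dirac (μ i)) := by
        have h := MeasureTheory.ae_eq_dirac (a := μ i) (fun x : ℝ => x)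
        exact (integrable_const ((fun x : ℝ => x) (μ i))).congr h.symm
      exact this.smul_measure ENNReal.ofReal_ne_top
    rw [hP, integral_finset_sum_measure hint] at hmean
    rw [← hmean]
    refine Finset.sum_congr rfl fun i hi => ?_
    rw [integral_smul_measure, integral_dirac, ENNReal.toReal_ofReal (hε i hi).le,
      smul_eq_mul, mul_comm]
  intro g hg hgk
  set A := ∑ i ∈ Finset.Icc 1 g, ε i * μ i with hA
  set E := ∑ i ∈ Finset.Icc 1 g, ε i with hE
  set e := ε (g + 1) with he
  set m := μ (g + 1) with hm
  set T := ∑ i ∈ Finset.Icc (g + 2) k, ε i with hT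
  set S := ∑ i ∈ Finset.Icc (g + 2) k, ε i * μ i with hS
  have hsub : Finset.Icc 1 g ⊆ Finset.Icc 1 k := Finset.Icc_subset_Icc_right (by omega)
  have hsub2 : Finset.Icc (g + 2) k ⊆ Finset.Icc 1 k := Finset.Icc_subset_Icc_left (by omega)
  have hEpos : 0 < E :=
    Finset.sum_pos (fun i hi => hε i (hsub hi)) ⟨1, by simp [Finset.mem_Icc]; omega⟩
  have hepos : 0 < e := hε (g + 1) (by simp [Finset.mem_Icc]; omega)
  have hTpos : 0 < T :=
    Finset.sum_pos (fun i hi => hε i (hsub2 hi)) ⟨k, by simp [Finset.mem_Icc]; omega⟩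
  -- splitting the total sums
  have hIoc : ∀ a b : ℕ, Finset.Icc (a + 1) b = Finset.Ioc a b := fun a b => Finset.Icc_add_one_left_eq_Ioc a b
  have hsplit : ∀ f : ℕ → ℝ, (∑ i ∈ Finset.Icc 1 g, f i) + f (g + 1)
      + ∑ i ∈ Finset.Icc (g + 2) k, f i = ∑ i ∈ Finset.Icc 1 k, f i := by
    intro f
    rw [hIoc 0, hIoc (g + 1), hIoc 0]
    rw [← Finset.sum_Ioc_consecutive f (Nat.zero_le (g + 1)) (by omega : g + 1 ≤ k),
      ← Finset.sum_Ioc_consecutive f (Nat.zero_le g) (by omega : g ≤ g + 1),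
      Nat.Ioc_succ_singleton, Finset.sum_singleton]
  have hsum' : E + e + T = 1 := by rw [hE, he, hT, hsplit]; exact hsum
  have hmean'' : A + e * m + S = 0 := by
    rw [hA, he, hm, hS]
    have := hsplit (fun i => ε i * μ i)
    rw [hmean'] at this; linarith [this]
  -- succ-top rewriting of the goal sums
  rw [Finset.sum_Icc_succ_top (by omega : 1 ≤ g + 1), Finset.sum_Icc_succ_top (by omega : 1 ≤ g + 1)]
  rw [← hA, ← hE, ← he, ← hm]
  -- key inequalities
  have hAm : A < E * m := by
    rw [hA, hE, Finset.sum_mul]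
    refine Finset.sum_lt_sum_of_nonempty ⟨1, by simp [Finset.mem_Icc]; omega⟩ ?_
    intro i hi
    have hi' := Finset.mem_Icc.mp hi
    have : μ i < m := hmono (g + 1) i hi'.1 (by omega) (by omega)
    have := hε i (hsub hi)
    nlinarith
  have hmT : m * T < S := by
    rw [hT, hS, Finset.mul_sum]
    refine Finset.sum_lt_sum_of_nonempty ⟨k, by simp [Finset.mem_Icc]; omega⟩ ?_
    intro i hi
    have hi' := Finset.mem_Icc.mp hi
    have : m < μ i := hmono i (g + 1) (by omega) (by omega) hi'.2
    have := hε i (hsub2 hi)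
    nlinarith
  have hkey : m * (1 - E) < -A := by nlinarith [hmT, hsum', hmean'']
  have hE1 : E + e < 1 := by linarith
  have h1 : A / E < (A + e * m) / (E + e) := by
    rw [div_lt_div_iff₀ hEpos (by linarith)]
    nlinarith
  have h2 : (-A) / (1 - E) < (-(A + e * m)) / (1 - (E + e)) := by
    rw [div_lt_div_iff₀ (by linarith) (by linarith)]
    nlinarith [mul_pos hepos (show (0:ℝ) < -A - m * (1 - E) by linarith)]
  have lhs_eq : A / 2 * (1 / E - 1 / (1 - E)) = (A / E + (-A) / (1 - E)) / 2 := by ring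
  have rhs_eq : (A + e * m) / 2 * (1 / (E + e) - 1 / (1 - (E + e)))
      = ((A + e * m) / (E + e) + (-(A + e * m)) / (1 - (E + e))) / 2 := by ring
  rw [lhs_eq, rhs_eq]
  linarith
end

section
/- Let X be a standardized k-Dirac mixture with k > 1, let γ = E[X³], s** = γ/2, and g** = Σ_{i=1}^k 1{μ_i ≤ s**}; assume μ_1 ≤ s** ≤ μ_k. Then Φ**(X) = 4 · Var|X − s**| satisfies Φ**(X) ≥ 1 if and only if 4 α_{g**} − (2 η_{g**} − 1) γ + √(γ² + 3) ≥ 0. -/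
open MeasureTheory ProbabilityTheory Finset

/-!
Since the atoms are increasing, those lying at or below `s = γ / 2` are exactly the first `g`,
so with `E X = 0` one gets `E|X - s| = s (2η - 1) - 2α`, while `E|X - s|² = E X² + s² = 1 + s²`.
Hence `4 Var|X - s| ≥ 1` reads `(2 E|X - s|)² ≤ 4 s² + 3 = γ² + 3`, and as `E|X - s| ≥ 0`
this is `2 E|X - s| = (2η - 1) γ - 4α ≤ √(γ² + 3)`.
-/

section DiracMixture

variable {α ι : Type*} [MeasurableSpace α]
  {s : Finset ι} {w : ι → ℝ} {x : ι → α}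

lemma integrable_finsetSum_dirac [MeasurableSingletonClass α] (f : α → ℝ) :
    Integrable f (∑ i ∈ s, ENNReal.ofReal (w i) • Measure.dirac (x i)) :=
  integrable_finsetSum_measure.mpr fun _ _ =>
    (integrable_dirac enorm_lt_top).smul_measure ENNReal.ofReal_ne_top

lemma integral_finsetSum_dirac [MeasurableSingletonClass α] (hw : ∀ i ∈ s, 0 ≤ w i)
    (f : α → ℝ) :
    ∫ y, f y ∂(∑ i ∈ s, ENNReal.ofReal (w i) • Measure.dirac (x i)) =
      ∑ i ∈ s, w i * f (x i) := by
  rw [integral_finsetSum_measure fun _ _ =>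
    (integrable_dirac enorm_lt_top).smul_measure ENNReal.ofReal_ne_top]
  refine sum_congr rfl fun i hi => ?_
  rw [integral_smul_measure, integral_dirac, ENNReal.toReal_ofReal (hw i hi), smul_eq_mul]

lemma isProbabilityMeasure_finsetSum_dirac (hw : ∀ i ∈ s, 0 ≤ w i) (h1 : ∑ i ∈ s, w i = 1) :
    IsProbabilityMeasure (∑ i ∈ s, ENNReal.ofReal (w i) • Measure.dirac (x i)) := by
  constructor
  simp only [Measure.finsetSum_apply, Measure.smul_apply, measure_univ, smul_eq_mul, mul_one]
  rw [← ENNReal.ofReal_sum_of_nonneg hw, h1, ENNReal.ofReal_one]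

end DiracMixture

lemma filter_le_Icc_eq_Icc_card {β : Type*} [LinearOrder β] {μ : ℕ → β} (t : β) :
    ∀ {k : ℕ}, MonotoneOn μ (Set.Icc 1 k) →
      {i ∈ Icc 1 k | μ i ≤ t} = Icc 1 #{i ∈ Icc 1 k | μ i ≤ t}
  | 0, _ => rfl
  | k + 1, hμ => by
    by_cases hlast : μ (k + 1) ≤ t
    · have hall : {i ∈ Icc 1 (k + 1) | μ i ≤ t} = Icc 1 (k + 1) :=
        filter_true_of_mem fun i hi =>
          (hμ (by simpa using hi) (by simp) (mem_Icc.mp hi).2).trans hlast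
      rw [hall, Nat.card_Icc, Nat.add_sub_cancel]
    · have hinit : {i ∈ Icc 1 (k + 1) | μ i ≤ t} = {i ∈ Icc 1 k | μ i ≤ t} := by
        rw [← insert_Icc_right_eq_Icc_add_one (by omega), filter_insert, if_neg hlast]
      rw [hinit]
      exact filter_le_Icc_eq_Icc_card t (hμ.mono (Set.Icc_subset_Icc_right k.le_succ))

lemma monotoneOn_Icc_of_lt_add_one {β : Type*} [Preorder β] {μ : ℕ → β} {k : ℕ}
    (h : ∀ i ∈ Ico 1 k, μ i < μ (i + 1)) : MonotoneOn μ (Set.Icc 1 k) :=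
  monotoneOn_of_le_succ Set.ordConnected_Icc fun i _ hi hi' =>
    (h i (mem_Ico.mpr ⟨hi.1, Nat.lt_of_succ_le hi'.2⟩)).le

section WeightedSums

variable {ι : Type*} (s : Finset ι) (w μ : ι → ℝ) (t : ℝ)

lemma sum_mul_sub_sq :
    ∑ i ∈ s, w i * (μ i - t) ^ 2 =
      ∑ i ∈ s, w i * μ i ^ 2 - 2 * t * ∑ i ∈ s, w i * μ i + t ^ 2 * ∑ i ∈ s, w i := by
  simp only [mul_sum, ← sum_sub_distrib, ← sum_add_distrib]
  exact sum_congr rfl fun _ _ => by ring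

lemma sum_mul_abs_sub :
    ∑ i ∈ s, w i * |μ i - t| =
      ∑ i ∈ s, w i * μ i - t * ∑ i ∈ s, w i +
        2 * (t * ∑ i ∈ s with μ i ≤ t, w i - ∑ i ∈ s with μ i ≤ t, w i * μ i) := by
  simp only [sum_filter, mul_sum, ← sum_sub_distrib, ← sum_add_distrib]
  refine sum_congr rfl fun i _ => ?_
  split_ifs with h
  · rw [abs_of_nonpos (sub_nonpos.mpr h)]; ring
  · rw [abs_of_pos (sub_pos.mpr (not_le.mp h))]; ring

end WeightedSums

lemma one_le_four_mul_sub_sq_iff {m γ : ℝ} (hm : 0 ≤ m) :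
    1 ≤ 4 * (1 + (γ / 2) ^ 2 - m ^ 2) ↔ 2 * m ≤ Real.sqrt (γ ^ 2 + 3) := by
  rw [Real.le_sqrt (by positivity) (by positivity)]
  constructor <;> intro h <;> linarith

theorem stmt_11_general (k : ℕ) (ε μ : ℕ → ℝ)
    (hε : ∀ i ∈ Finset.Icc 1 k, 0 < ε i)
    (hsum : ∑ i ∈ Finset.Icc 1 k, ε i = 1)
    (hord : ∀ i ∈ Finset.Ico 1 k, μ i < μ (i + 1))
    (P : Measure ℝ)
    (hP : P = ∑ i ∈ Finset.Icc 1 k, ENNReal.ofReal (ε i) • Measure.dirac (μ i))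
    (hmean : ∫ x, x ∂P = 0) (hm2 : ∫ x, x ^ 2 ∂P = 1)
    (γ sstarstar : ℝ) (hss : sstarstar = γ / 2)
    (gstarstar : ℕ)
    (hg : gstarstar = ∑ i ∈ Finset.Icc 1 k, if μ i ≤ sstarstar then 1 else 0)
    (α η : ℝ)
    (hα : α = ∑ i ∈ Finset.Icc 1 gstarstar, ε i * μ i)
    (hη : η = ∑ i ∈ Finset.Icc 1 gstarstar, ε i) :
    1 ≤ 4 * variance (fun x => |x - sstarstar|) P ↔
      0 ≤ 4 * α - (2 * η - 1) * γ + Real.sqrt (γ ^ 2 + 3) := by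
  have hε0 : ∀ i ∈ Icc 1 k, 0 ≤ ε i := fun i hi => (hε i hi).le
  have hP1 : IsProbabilityMeasure P := hP ▸ isProbabilityMeasure_finsetSum_dirac hε0 hsum
  rw [hP, integral_finsetSum_dirac hε0] at hmean hm2
  have hbelow : {i ∈ Icc 1 k | μ i ≤ sstarstar} = Icc 1 gstarstar := by
    rw [hg, ← card_filter]
    exact filter_le_Icc_eq_Icc_card _ (monotoneOn_Icc_of_lt_add_one hord)
  have hmad : ∫ x, |x - sstarstar| ∂P = sstarstar * (2 * η - 1) - 2 * α := by
    rw [hP, integral_finsetSum_dirac hε0, sum_mul_abs_sub, hbelow, hmean, hsum, ← hα, ← hη]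
    ring
  have hsq : ∫ x, |x - sstarstar| ^ 2 ∂P = 1 + sstarstar ^ 2 := by
    simp only [sq_abs]
    rw [hP, integral_finsetSum_dirac hε0, sum_mul_sub_sq, hm2, hmean, hsum]
    ring
  have hvar : variance (fun x => |x - sstarstar|) P =
      1 + (γ / 2) ^ 2 - (sstarstar * (2 * η - 1) - 2 * α) ^ 2 := by
    have hL2 : MemLp (fun x => |x - sstarstar|) 2 P :=
      (memLp_two_iff_integrable_sq (by fun_prop)).mpr (hP ▸ integrable_finsetSum_dirac _)
    rw [variance_eq_sub hL2, Pi.pow_def, hsq, hmad, hss]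
  rw [hvar, one_le_four_mul_sub_sq_iff (hmad ▸ integral_nonneg fun _ => abs_nonneg _), hss]
  constructor <;> intro h <;> linarith

/-- For a standardized `k`-Dirac mixture `X` (law `P`), let `γ = E[X³]`,
`s⋆⋆ = γ / 2`, `g⋆⋆ = Σ_{i=1}^k 1{μᵢ ≤ s⋆⋆}`, and assume `μ₁ ≤ s⋆⋆ ≤ μ_k`. Then
`Φ⋆⋆(X) = 4 · Var |X - s⋆⋆| ≥ 1` if and only if
`4 α_{g⋆⋆} - (2 η_{g⋆⋆} - 1) γ + √(γ² + 3) ≥ 0`. -/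
theorem stmt_11 (k : ℕ) (hk : 1 < k) (ε μ : ℕ → ℝ)
    (hε : ∀ i ∈ Finset.Icc 1 k, 0 < ε i)
    (hsum : ∑ i ∈ Finset.Icc 1 k, ε i = 1)
    (hord : ∀ i ∈ Finset.Ico 1 k, μ i < μ (i + 1))
    (P : Measure ℝ)
    (hP : P = ∑ i ∈ Finset.Icc 1 k, ENNReal.ofReal (ε i) • Measure.dirac (μ i))
    (hmean : ∫ x, x ∂P = 0) (hm2 : ∫ x, x ^ 2 ∂P = 1)
    (γ sstarstar : ℝ) (hγ : γ = ∫ x, x ^ 3 ∂P) (hss : sstarstar = γ / 2)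
    (gstarstar : ℕ)
    (hg : gstarstar = ∑ i ∈ Finset.Icc 1 k, if μ i ≤ sstarstar then 1 else 0)
    (hlo : μ 1 ≤ sstarstar) (hhi : sstarstar ≤ μ k)
    (α η : ℝ)
    (hα : α = ∑ i ∈ Finset.Icc 1 gstarstar, ε i * μ i)
    (hη : η = ∑ i ∈ Finset.Icc 1 gstarstar, ε i) :
    1 ≤ 4 * variance (fun x => |x - sstarstar|) P ↔
      0 ≤ 4 * α - (2 * η - 1) * γ + Real.sqrt (γ ^ 2 + 3) :=
  stmt_11_general k ε μ hε hsum hord P hP hmean hm2 γ sstarstar hss gstarstar hg α η hα hη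
end

section
/- Let X be a 2-Dirac mixture, i.e., X takes value μ_1 with probability ε and μ_2 with probability 1 − ε, where 0 < ε < 1 and μ_1 < μ_2. Then min_{s ∈ ℝ} Var|X − s| = 0, attained at s = (μ_1 + μ_2)/2, and moreover Var|X − s**| = 0 where s** = Cov(X, X²)/(2 Var X) is the minimizer of s ↦ Var[(X − s)²]. Hence both standardized folding ratios Φ*(X) = 4 · min_s Var|X − s| / Var X and Φ**(X) = 4 · Var|X − s**| / Var X equal 0. -/
/-!
Under a two-point law the variance of `f(X)` is `ε (1 - ε) (f μ₁ - f μ₂)²`, so it vanishes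
exactly when `f` takes the same value at both atoms. Both `|x - s|` and `(x - s)²` do so at the
midpoint `s = (μ₁ + μ₂)/2`, and a direct computation shows `s⋆⋆` is that midpoint.
-/

open MeasureTheory ProbabilityTheory

noncomputable section

section DiracMixture

variable {α : Type*} [MeasurableSpace α] [MeasurableSingletonClass α] {p : ℝ} {a b : α}

def diracMixture (p : ℝ) (a b : α) : Measure α :=
  ENNReal.ofReal p • Measure.dirac a + ENNReal.ofReal (1 - p) • Measure.dirac b

lemma integral_diracMixture (hp0 : 0 ≤ p) (hp1 : p ≤ 1) (f : α → ℝ) :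
    ∫ x, f x ∂diracMixture p a b = p * f a + (1 - p) * f b := by
  have hint : ∀ c, Integrable f (Measure.dirac c) := fun c => integrable_dirac enorm_lt_top
  rw [diracMixture, integral_add_measure ((hint a).smul_measure ENNReal.ofReal_ne_top)
      ((hint b).smul_measure ENNReal.ofReal_ne_top),
    integral_smul_measure, integral_smul_measure, integral_dirac, integral_dirac,
    ENNReal.toReal_ofReal hp0, ENNReal.toReal_ofReal (sub_nonneg.2 hp1), smul_eq_mul,
    smul_eq_mul]

lemma lintegral_diracMixture (g : α → ENNReal) :
    ∫⁻ x, g x ∂diracMixture p a b = ENNReal.ofReal p * g a + ENNReal.ofReal (1 - p) * g b := by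
  rw [diracMixture, lintegral_add_measure, lintegral_smul_measure, lintegral_smul_measure,
    lintegral_dirac, lintegral_dirac, smul_eq_mul, smul_eq_mul]

lemma variance_diracMixture (hp0 : 0 ≤ p) (hp1 : p ≤ 1) (f : α → ℝ) :
    variance f (diracMixture p a b) = p * (1 - p) * (f a - f b) ^ 2 := by
  have hq0 : 0 ≤ 1 - p := sub_nonneg.2 hp1
  rw [variance, evariance_eq_lintegral_ofReal, lintegral_diracMixture,
    integral_diracMixture hp0 hp1, ← ENNReal.ofReal_mul hp0, ← ENNReal.ofReal_mul hq0,
    ← ENNReal.ofReal_add (by positivity) (by positivity), ENNReal.toReal_ofReal (by positivity)]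
  ring

lemma variance_diracMixture_eq_zero (hp0 : 0 ≤ p) (hp1 : p ≤ 1) {f : α → ℝ} (h : f a = f b) :
    variance f (diracMixture p a b) = 0 := by
  rw [variance_diracMixture hp0 hp1, h, sub_self]
  ring

end DiracMixture

lemma cov_div_two_variance_diracMixture {p a b : ℝ} (hp0 : 0 < p) (hp1 : p < 1) (hab : a ≠ b) :
    ((∫ x, x * x ^ 2 ∂diracMixture p a b) -
        (∫ x, x ∂diracMixture p a b) * (∫ x, x ^ 2 ∂diracMixture p a b)) /
      (2 * variance (fun x => x) (diracMixture p a b)) = (a + b) / 2 := by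
  have hq : 1 - p ≠ 0 := sub_ne_zero.2 hp1.ne'
  have hd : a - b ≠ 0 := sub_ne_zero.2 hab
  rw [integral_diracMixture hp0.le hp1.le, integral_diracMixture hp0.le hp1.le,
    integral_diracMixture hp0.le hp1.le, variance_diracMixture hp0.le hp1.le]
  field_simp
  ring

lemma abs_sub_midpoint_left_eq_right (a b : ℝ) : |a - (a + b) / 2| = |b - (a + b) / 2| := by
  rw [← abs_neg]
  ring_nf

/-- Let `X` be a 2-Dirac mixture taking value `μ₁` with probability `ε` and
`μ₂` with probability `1 - ε`, where `0 < ε < 1` and `μ₁ < μ₂`. Then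
`min_{s ∈ ℝ} Var |X - s| = 0`, attained at `s = (μ₁ + μ₂)/2`; moreover `Var |X - s⋆⋆| = 0`
where `s⋆⋆ = Cov(X, X²)/(2 Var X)` is the minimizer of `s ↦ Var ((X - s)²)`. Hence both
standardized folding ratios `Φ⋆(X)` and `Φ⋆⋆(X)` equal `0`. -/
theorem stmt_12 (ε μ₁ μ₂ : ℝ) (hε0 : 0 < ε) (hε1 : ε < 1) (hμ : μ₁ < μ₂)
    (P : Measure ℝ)
    (hP : P = ENNReal.ofReal ε • Measure.dirac μ₁ +
      ENNReal.ofReal (1 - ε) • Measure.dirac μ₂)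
    (sstarstar : ℝ)
    (hss : sstarstar = ((∫ x, x * x ^ 2 ∂P) - (∫ x, x ∂P) * (∫ x, x ^ 2 ∂P)) /
      (2 * variance (fun x => x) P)) :
    (⨅ s : ℝ, variance (fun x => |x - s|) P) = 0 ∧
    variance (fun x => |x - (μ₁ + μ₂) / 2|) P = 0 ∧
    (∀ s : ℝ, variance (fun x => (x - sstarstar) ^ 2) P ≤
      variance (fun x => (x - s) ^ 2) P) ∧
    variance (fun x => |x - sstarstar|) P = 0 ∧
    4 * (⨅ s : ℝ, variance (fun x => |x - s|) P) / variance (fun x => x) P = 0 ∧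
    4 * variance (fun x => |x - sstarstar|) P / variance (fun x => x) P = 0 := by
  obtain rfl : P = diracMixture ε μ₁ μ₂ := hP
  obtain rfl : sstarstar = (μ₁ + μ₂) / 2 :=
    hss.trans (cov_div_two_variance_diracMixture hε0 hε1 hμ.ne)
  have hfold : variance (fun x => |x - (μ₁ + μ₂) / 2|) (diracMixture ε μ₁ μ₂) = 0 :=
    variance_diracMixture_eq_zero hε0.le hε1.le (abs_sub_midpoint_left_eq_right μ₁ μ₂)
  have hsq : variance (fun x => (x - (μ₁ + μ₂) / 2) ^ 2) (diracMixture ε μ₁ μ₂) = 0 :=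
    variance_diracMixture_eq_zero hε0.le hε1.le <| by
      rw [← sq_abs, abs_sub_midpoint_left_eq_right, sq_abs]
  have hinf : (⨅ s : ℝ, variance (fun x => |x - s|) (diracMixture ε μ₁ μ₂)) = 0 :=
    le_antisymm (ciInf_le_of_le ⟨0, by rintro _ ⟨s, rfl⟩; exact variance_nonneg _ _⟩ _ hfold.le)
      (le_ciInf fun _ => variance_nonneg _ _)
  exact ⟨hinf, hfold, fun _ => hsq ▸ variance_nonneg _ _, hfold, by simp [hinf], by simp [hfold]⟩
end
end

section
/- Let a > 0 and let X be the balanced symmetric 3-Dirac mixture taking each of the values −a, 0, a with probability 1/3. Then: (i) min_{s ∈ ℝ} Var|X − s| = Var(X)/4, attained at s = a/4 and at s = −a/4, so Φ*(X) = 1; (ii) the minimizer of s ↦ Var[(X − s)²] is s** = 0, and 4 · Var|X| / Var X = 4/3, so Φ**(X) = 4/3. -/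
/-!
Every variance in the statement is a finite computation: under the uniform law on `{-a, 0, a}`,
`Var |X - s| = 2a²/3 + s² - ((|a + s| + |s| + |a - s|)/3)²`. For `|s| ≤ a` this equals
`a²/6 + (a - 4|s|)²/18`, and for `|s| ≥ a` it equals `Var X = 2a²/3`, so the minimum `Var X / 4`
is attained exactly at `s = ± a/4`. Likewise `Var (X - s)² = (2a⁴ + 24a²s²)/9` is minimal only
at `s = 0`.
-/

open MeasureTheory ProbabilityTheory

noncomputable def uniformThree {α : Type*} [MeasurableSpace α] (x y z : α) : Measure α :=
  ENNReal.ofReal (1 / 3) • Measure.dirac x + ENNReal.ofReal (1 / 3) • Measure.dirac y +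
    ENNReal.ofReal (1 / 3) • Measure.dirac z

section UniformThree

variable {α : Type*} [MeasurableSpace α] (x y z : α)

instance isProbabilityMeasure_uniformThree : IsProbabilityMeasure (uniformThree x y z) := by
  constructor
  simp only [uniformThree, Measure.add_apply, Measure.smul_apply, measure_univ, smul_eq_mul,
    mul_one]
  rw [← ENNReal.ofReal_add (by norm_num) (by norm_num),
    ← ENNReal.ofReal_add (by norm_num) (by norm_num)]
  norm_num

variable [MeasurableSingletonClass α]

lemma integrable_uniformThree (f : α → ℝ) : Integrable f (uniformThree x y z) := by
  have hne : ENNReal.ofReal (1 / 3) ≠ ⊤ := ENNReal.ofReal_ne_top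
  have hdirac (t : α) := (integrable_dirac (f := f) (a := t) enorm_lt_top).smul_measure hne
  exact ((hdirac x).add_measure (hdirac y)).add_measure (hdirac z)

lemma integral_uniformThree (f : α → ℝ) :
    ∫ t, f t ∂uniformThree x y z = (f x + f y + f z) / 3 := by
  have hne : ENNReal.ofReal (1 / 3) ≠ ⊤ := ENNReal.ofReal_ne_top
  have hdirac (t : α) := (integrable_dirac (f := f) (a := t) enorm_lt_top).smul_measure hne
  rw [uniformThree, integral_add_measure ((hdirac x).add_measure (hdirac y)) (hdirac z),
    integral_add_measure (hdirac x) (hdirac y)]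
  simp only [integral_smul_measure, integral_dirac,
    ENNReal.toReal_ofReal (by norm_num : (0 : ℝ) ≤ 1 / 3), smul_eq_mul]
  ring

lemma variance_uniformThree (f : α → ℝ) :
    variance f (uniformThree x y z) =
      (f x ^ 2 + f y ^ 2 + f z ^ 2) / 3 - ((f x + f y + f z) / 3) ^ 2 := by
  have hf := integrable_uniformThree x y z f
  have hmem : MemLp f 2 (uniformThree x y z) :=
    (memLp_two_iff_integrable_sq hf.aestronglyMeasurable).2 (integrable_uniformThree x y z _)
  rw [variance_eq_sub hmem]
  simp only [Pi.pow_apply, integral_uniformThree]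

end UniformThree

section SymmetricThreePoint

variable (a : ℝ)

lemma variance_id_uniformThree_symm :
    variance (fun x => x) (uniformThree (-a) 0 a) = 2 * a ^ 2 / 3 := by
  rw [variance_uniformThree]
  ring

lemma variance_abs_sub_uniformThree_symm (s : ℝ) :
    variance (fun x => |x - s|) (uniformThree (-a) 0 a) =
      2 * a ^ 2 / 3 + s ^ 2 - ((|a + s| + |s| + |a - s|) / 3) ^ 2 := by
  rw [variance_uniformThree, show -a - s = -(a + s) by ring, zero_sub, abs_neg, abs_neg]
  simp only [sq_abs]
  ring

lemma sq_div_six_le_variance_abs_sub_uniformThree_symm (s : ℝ) :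
    a ^ 2 / 6 ≤ variance (fun x => |x - s|) (uniformThree (-a) 0 a) := by
  rw [variance_abs_sub_uniformThree_symm]
  rcases abs_cases s with ⟨h1, -⟩ | ⟨h1, -⟩ <;>
    rcases abs_cases (a + s) with ⟨h2, -⟩ | ⟨h2, -⟩ <;>
    rcases abs_cases (a - s) with ⟨h3, -⟩ | ⟨h3, -⟩ <;>
    rw [h1, h2, h3] <;>
    nlinarith [sq_nonneg (a - 4 * s), sq_nonneg (a + 4 * s), sq_nonneg s, sq_nonneg a]

variable {a}

lemma variance_abs_sub_quarter_uniformThree_symm (ha : 0 ≤ a) :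
    variance (fun x => |x - a / 4|) (uniformThree (-a) 0 a) = a ^ 2 / 6 := by
  rw [variance_abs_sub_uniformThree_symm, abs_of_nonneg (by linarith),
    abs_of_nonneg (by linarith), abs_of_nonneg (by linarith)]
  ring

lemma variance_abs_add_quarter_uniformThree_symm (ha : 0 ≤ a) :
    variance (fun x => |x - -(a / 4)|) (uniformThree (-a) 0 a) = a ^ 2 / 6 := by
  rw [variance_abs_sub_uniformThree_symm, abs_of_nonneg (by linarith),
    abs_of_nonpos (by linarith), abs_of_nonneg (by linarith)]
  ring

variable (a)

lemma variance_sq_sub_uniformThree_symm (s : ℝ) :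
    variance (fun x => (x - s) ^ 2) (uniformThree (-a) 0 a) =
      (2 * a ^ 4 + 24 * a ^ 2 * s ^ 2) / 9 := by
  rw [variance_uniformThree]
  ring

lemma variance_abs_uniformThree_symm :
    variance (fun x => |x|) (uniformThree (-a) 0 a) = 2 * a ^ 2 / 9 := by
  rw [variance_uniformThree, abs_neg, abs_zero, ← sq_abs a]
  ring

end SymmetricThreePoint

/-- Let `a > 0` and let `X` be the balanced symmetric 3-Dirac mixture taking
each of the values `-a`, `0`, `a` with probability `1/3`. Then:
(i) `min_{s ∈ ℝ} Var |X - s| = Var X / 4`, attained at `s = a/4` and at `s = -a/4`, so that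
`Φ⋆(X) = 4 · min_s Var |X - s| / Var X = 1`;
(ii) the (unique) minimizer of `s ↦ Var ((X - s)²)` is `s⋆⋆ = 0`, and
`4 · Var |X| / Var X = 4/3`, so `Φ⋆⋆(X) = 4/3`. -/
theorem stmt_13 (a : ℝ) (ha : 0 < a)
    (P : Measure ℝ)
    (hP : P = ENNReal.ofReal (1 / 3) • Measure.dirac (-a) +
      ENNReal.ofReal (1 / 3) • Measure.dirac 0 +
      ENNReal.ofReal (1 / 3) • Measure.dirac a) :
    (∀ s : ℝ, variance (fun x => x) P / 4 ≤ variance (fun x => |x - s|) P) ∧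
    variance (fun x => |x - a / 4|) P = variance (fun x => x) P / 4 ∧
    variance (fun x => |x - (-(a / 4))|) P = variance (fun x => x) P / 4 ∧
    4 * (⨅ s : ℝ, variance (fun x => |x - s|) P) / variance (fun x => x) P = 1 ∧
    (∀ s : ℝ, s ≠ 0 →
      variance (fun x => x ^ 2) P < variance (fun x => (x - s) ^ 2) P) ∧
    4 * variance (fun x => |x|) P / variance (fun x => x) P = 4 / 3 := by
  obtain rfl : P = uniformThree (-a) 0 a := hP
  have hquarter : variance (fun x => x) (uniformThree (-a) 0 a) / 4 = a ^ 2 / 6 := by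
    rw [variance_id_uniformThree_symm]
    ring
  have hinf : ⨅ s : ℝ, variance (fun x => |x - s|) (uniformThree (-a) 0 a) = a ^ 2 / 6 :=
    IsGLB.ciInf_eq (IsLeast.isGLB
      ⟨⟨a / 4, variance_abs_sub_quarter_uniformThree_symm ha.le⟩,
        Set.forall_mem_range.2 (sq_div_six_le_variance_abs_sub_uniformThree_symm a)⟩)
  have ha2 : 0 < a ^ 2 := by positivity
  refine ⟨fun s => hquarter ▸ sq_div_six_le_variance_abs_sub_uniformThree_symm a s,
    hquarter ▸ variance_abs_sub_quarter_uniformThree_symm ha.le,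
    hquarter ▸ variance_abs_add_quarter_uniformThree_symm ha.le, ?_, fun s hs => ?_, ?_⟩
  · rw [hinf, variance_id_uniformThree_symm]
    field_simp
    ring
  · have hsq := variance_sq_sub_uniformThree_symm a 0
    simp only [sub_zero] at hsq
    rw [hsq, variance_sq_sub_uniformThree_symm]
    have : 0 < s ^ 2 := by positivity
    nlinarith
  · rw [variance_abs_uniformThree_symm, variance_id_uniformThree_symm]
    field_simp
    ring
end

section
/- Let k > 1, let ε_1,…,ε_k > 0 with Σ ε_i = 1, let μ_1,…,μ_k ∈ ℝ and σ_1,…,σ_k > 0, and let X be distributed as the Gaussian mixture Σ_{i=1}^k ε_i N(μ_i, σ_i²) with E[X] = 0. Then for every s ∈ ℝ, Var|X − s| = Var X + s² − (Σ_{i=1}^k ε_i h(μ_i, σ_i, s))², where h(μ, σ, s) = (s − μ)(2F((s−μ)/σ) − 1) + 2σ f((s−μ)/σ), and f and F denote the probability density function and the cumulative distribution function of the standard normal distribution N(0,1). -/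
/-!
With `Y = X - s`, `Var |Y| = E[Y²] - (E|Y|)²` and `E[Y²] = Var X + s²` because `E[X] = 0`, so
everything reduces to the first absolute moment `E|X - s|`, which for a mixture is the weighted
sum of the moments of its components. For `Z ~ N(0, 1)` one has
`|Z - t| = (Z - t) + 2 (t - Z)⁺`, and `∫_{-∞}^t z φ(z) dz = -φ(t)` since `φ' = -z φ`; hence
`E|Z - t| = t (2Φ(t) - 1) + 2 φ(t)`, and the change of variables `X = σ Z + μ` turns this into
`E|X - s| = h(μ, σ, s)`.
-/
open MeasureTheory ProbabilityTheory

/-- The function `h(μ, σ, s) = (s - μ)(2 F((s - μ)/σ) - 1) + 2 σ f((s - μ)/σ)`, where `f` and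
`F` are the pdf and cdf of the standard normal distribution `N(0, 1)`. -/
noncomputable def foldGauss (μ σ s : ℝ) : ℝ :=
  (s - μ) * (2 * ProbabilityTheory.cdf (ProbabilityTheory.gaussianReal 0 1) ((s - μ) / σ) - 1) +
    2 * σ * ProbabilityTheory.gaussianPDFReal 0 1 ((s - μ) / σ)

open Real Filter Set Topology

lemma hasDerivAt_gaussianPDFReal (μ : ℝ) (v : NNReal) (x : ℝ) :
    HasDerivAt (gaussianPDFReal μ v) (-((x - μ) / v) * gaussianPDFReal μ v x) x := by
  have h := ((((hasDerivAt_id' x).sub_const μ).fun_pow 2).fun_neg.div_const (2 * (v : ℝ))).exp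
    |>.const_mul (√(2 * π * v))⁻¹
  rw [gaussianPDFReal_def]
  exact h.congr_deriv (by ring)

lemma tendsto_gaussianPDFReal_zero_one_atBot : Tendsto (gaussianPDFReal 0 1) atBot (𝓝 0) := by
  have h : Tendsto (fun x : ℝ => -x ^ 2 / 2) atBot atBot := by
    have := (tendsto_neg_const_mul_pow_atTop (c := (-1/2 : ℝ)) two_ne_zero (by norm_num)).comp
      tendsto_neg_atBot_atTop
    convert this using 1
    ext x
    simp only [Function.comp_apply, even_two, Even.neg_pow]
    ring
  simpa [gaussianPDFReal_def] using (tendsto_exp_atBot.comp h).const_mul (√(2 * π))⁻¹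

lemma integrable_gaussianReal_iff {E : Type*} [NormedAddCommGroup E] [NormedSpace ℝ E]
    {μ : ℝ} {v : NNReal} {f : ℝ → E} (hv : v ≠ 0) :
    Integrable f (gaussianReal μ v) ↔ Integrable (fun x => gaussianPDFReal μ v x • f x) := by
  rw [gaussianReal_of_var_ne_zero _ hv, integrable_withDensity_iff_integrable_smul'
    (measurable_gaussianPDF _ _) (ae_of_all _ fun _ => gaussianPDF_lt_top)]
  simp

lemma setIntegral_Iic_gaussianReal_zero_one (t : ℝ) :
    ∫ z in Iic t, z ∂gaussianReal 0 1 = -gaussianPDFReal 0 1 t := by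
  have hint : Integrable (fun z => gaussianPDFReal 0 1 z • z) :=
    (integrable_gaussianReal_iff one_ne_zero).1 ((memLp_id_gaussianReal 1).integrable le_rfl)
  have hderiv (z : ℝ) :
      HasDerivAt (fun z => -gaussianPDFReal 0 1 z) (gaussianPDFReal 0 1 z • z) z := by
    simpa [mul_comm] using (hasDerivAt_gaussianPDFReal 0 1 z).fun_neg
  calc ∫ z in Iic t, z ∂gaussianReal 0 1
      = ∫ z in Iic t, gaussianPDFReal 0 1 z • z := by
        simp_rw [← integral_indicator measurableSet_Iic,
          integral_gaussianReal_eq_integral_smul one_ne_zero, ← indicator_smul_apply]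
    _ = -gaussianPDFReal 0 1 t := by
        rw [integral_Iic_of_hasDerivAt_of_tendsto (hderiv t).continuousAt.continuousWithinAt
          (fun z _ => hderiv z) hint.integrableOn
          (by simpa using tendsto_gaussianPDFReal_zero_one_atBot.neg), sub_zero]

lemma integral_abs_sub_gaussianReal_zero_one (t : ℝ) :
    ∫ z, |z - t| ∂gaussianReal 0 1 =
      t * (2 * cdf (gaussianReal 0 1) t - 1) + 2 * gaussianPDFReal 0 1 t := by
  have hid : Integrable (fun z : ℝ => z) (gaussianReal 0 1) :=
    (memLp_id_gaussianReal 1).integrable le_rfl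
  have hsub : Integrable (fun z => z - t) (gaussianReal 0 1) := hid.sub (integrable_const t)
  have hsub' : Integrable (fun z => t - z) (gaussianReal 0 1) := (integrable_const t).sub hid
  have hdecomp (z : ℝ) : |z - t| = (z - t) + 2 * (Iic t).indicator (fun z => t - z) z := by
    by_cases hz : z ≤ t
    · simp only [abs_of_nonpos (sub_nonpos.2 hz), neg_sub, mem_Iic, hz, indicator_of_mem]
      ring
    · simp [hz, abs_of_pos (sub_pos.2 (not_le.1 hz))]
  simp_rw [hdecomp]
  rw [integral_add hsub ((hsub'.indicator measurableSet_Iic).const_mul 2),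
    integral_const_mul, integral_indicator measurableSet_Iic,
    integral_sub hid (integrable_const t),
    integral_sub (integrable_const t).integrableOn hid.integrableOn,
    setIntegral_Iic_gaussianReal_zero_one, setIntegral_const, integral_id_gaussianReal,
    integral_const, cdf_eq_real]
  simp only [probReal_univ, smul_eq_mul, one_mul, zero_sub, sub_neg_eq_add]
  ring

lemma gaussianReal_eq_map_mul_add (μ σ : ℝ) :
    gaussianReal μ (σ ^ 2).toNNReal = (gaussianReal 0 1).map (fun z => σ * z + μ) := by
  change _ = (gaussianReal 0 1).map ((· + μ) ∘ (σ * ·))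
  rw [← Measure.map_map (by fun_prop) (by fun_prop), gaussianReal_map_const_mul,
    gaussianReal_map_add_const]
  congr 1
  · ring
  · ext; simp [sq_nonneg σ]

lemma integral_abs_sub_gaussianReal {μ σ : ℝ} (hσ : 0 < σ) (s : ℝ) :
    ∫ x, |x - s| ∂gaussianReal μ (σ ^ 2).toNNReal = foldGauss μ σ s := by
  have hscale (z : ℝ) : |σ * z + μ - s| = σ * |z - (s - μ) / σ| := by
    rw [← abs_of_pos hσ, ← abs_mul, abs_of_pos hσ]
    congr 1
    field_simp
    ring
  rw [gaussianReal_eq_map_mul_add, integral_map (by fun_prop) (by fun_prop)]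
  simp_rw [hscale]
  rw [integral_const_mul, integral_abs_sub_gaussianReal_zero_one, foldGauss]
  field_simp

section Mixture

variable {ι α : Type*} [MeasurableSpace α] {s : Finset ι} {w : ι → ℝ} {ν : ι → Measure α}

lemma isProbabilityMeasure_finsetSum_smul [∀ i, IsProbabilityMeasure (ν i)]
    (hw : ∀ i ∈ s, 0 ≤ w i) (hsum : ∑ i ∈ s, w i = 1) :
    IsProbabilityMeasure (∑ i ∈ s, ENNReal.ofReal (w i) • ν i) := by
  constructor
  simp only [Measure.finsetSum_apply, Measure.smul_apply, measure_univ, smul_eq_mul, mul_one]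
  rw [← ENNReal.ofReal_sum_of_nonneg hw, hsum, ENNReal.ofReal_one]

lemma integrable_finsetSum_smul_measure {f : α → ℝ} (hf : ∀ i ∈ s, Integrable f (ν i)) :
    Integrable f (∑ i ∈ s, ENNReal.ofReal (w i) • ν i) :=
  integrable_finsetSum_measure.2 fun i hi => (hf i hi).smul_measure ENNReal.ofReal_ne_top

lemma integral_finsetSum_smul_measure {f : α → ℝ} (hw : ∀ i ∈ s, 0 ≤ w i)
    (hf : ∀ i ∈ s, Integrable f (ν i)) :
    ∫ x, f x ∂(∑ i ∈ s, ENNReal.ofReal (w i) • ν i) = ∑ i ∈ s, w i * ∫ x, f x ∂ν i := by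
  rw [integral_finsetSum_measure fun i hi => (hf i hi).smul_measure ENNReal.ofReal_ne_top]
  refine Finset.sum_congr rfl fun i hi => ?_
  rw [integral_smul_measure, ENNReal.toReal_ofReal (hw i hi), smul_eq_mul]

end Mixture

lemma variance_abs_sub_const {Ω : Type*} [MeasurableSpace Ω] {P : Measure Ω}
    [IsProbabilityMeasure P] {X : Ω → ℝ} (hX : MemLp X 2 P) (s : ℝ) :
    Var[fun ω => |X ω - s|; P] = Var[X; P] + (P[X] - s) ^ 2 - (∫ ω, |X ω - s| ∂P) ^ 2 := by
  have hY : MemLp (fun ω => X ω - s) 2 P := hX.sub (memLp_const s)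
  rw [variance_eq_sub (X := fun ω => |X ω - s|) hY.abs,
    ← variance_sub_const hX.aestronglyMeasurable s, variance_eq_sub hY,
    integral_sub (hX.integrable one_le_two) (integrable_const s)]
  simp [sq_abs]

theorem stmt_15_general (k : ℕ) (ε μ σ : ℕ → ℝ)
    (hε : ∀ i ∈ Finset.Icc 1 k, 0 < ε i)
    (hsum : ∑ i ∈ Finset.Icc 1 k, ε i = 1)
    (hσ : ∀ i ∈ Finset.Icc 1 k, 0 < σ i)
    (P : Measure ℝ)
    (hP : P = ∑ i ∈ Finset.Icc 1 k, ENNReal.ofReal (ε i) •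
      ProbabilityTheory.gaussianReal (μ i) ((σ i) ^ 2).toNNReal)
    (hmean : ∫ x, x ∂P = 0) :
    ∀ s : ℝ, variance (fun x => |x - s|) P =
      variance (fun x => x) P + s ^ 2 -
        (∑ i ∈ Finset.Icc 1 k, ε i * foldGauss (μ i) (σ i) s) ^ 2 := by
  intro s
  have hε' : ∀ i ∈ Finset.Icc 1 k, 0 ≤ ε i := fun i hi => (hε i hi).le
  have : IsProbabilityMeasure P := hP ▸ isProbabilityMeasure_finsetSum_smul hε' hsum
  have hX : MemLp (fun x : ℝ => x) 2 P := by
    rw [memLp_two_iff_integrable_sq (by fun_prop), hP]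
    exact integrable_finsetSum_smul_measure fun i _ => (memLp_id_gaussianReal 2).integrable_sq
  have hfold : ∫ x, |x - s| ∂P = ∑ i ∈ Finset.Icc 1 k, ε i * foldGauss (μ i) (σ i) s := by
    have hint (i : ℕ) : Integrable (fun x => |x - s|) (gaussianReal (μ i) (σ i ^ 2).toNNReal) :=
      (((memLp_id_gaussianReal 1).integrable le_rfl).sub (integrable_const s)).abs
    rw [hP, integral_finsetSum_smul_measure hε' fun i _ => hint i]
    exact Finset.sum_congr rfl fun i hi => by rw [integral_abs_sub_gaussianReal (hσ i hi)]
  rw [variance_abs_sub_const hX, hmean, hfold]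
  ring

/-- Let `X` follow the Gaussian mixture `Σᵢ εᵢ N(μᵢ, σᵢ²)` with `εᵢ > 0`,
`Σ εᵢ = 1`, `σᵢ > 0`, and `E[X] = 0`. Then for every `s ∈ ℝ`,
`Var |X - s| = Var X + s² - (Σᵢ εᵢ h(μᵢ, σᵢ, s))²`. -/
theorem stmt_15 (k : ℕ) (hk : 1 < k) (ε μ σ : ℕ → ℝ)
    (hε : ∀ i ∈ Finset.Icc 1 k, 0 < ε i)
    (hsum : ∑ i ∈ Finset.Icc 1 k, ε i = 1)
    (hσ : ∀ i ∈ Finset.Icc 1 k, 0 < σ i)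
    (P : Measure ℝ)
    (hP : P = ∑ i ∈ Finset.Icc 1 k, ENNReal.ofReal (ε i) •
      ProbabilityTheory.gaussianReal (μ i) ((σ i) ^ 2).toNNReal)
    (hmean : ∫ x, x ∂P = 0) :
    ∀ s : ℝ, variance (fun x => |x - s|) P =
      variance (fun x => x) P + s ^ 2 -
        (∑ i ∈ Finset.Icc 1 k, ε i * foldGauss (μ i) (σ i) s) ^ 2 :=
  stmt_15_general k ε μ σ hε hsum hσ P hP hmean
end

section
/- Let X be a standardized 3-Dirac mixture with ordered locations μ_1 < μ_2 < μ_3, probabilities ε_1, ε_2, ε_3 > 0 summing to 1 (so ε_2 = 1 − ε_1 − ε_3), and let s* denote the smallest minimizer of s ↦ Var|X − s|. Then s* ∈ [μ_1, μ_2] if and only if μ_1 ≤ U(ε_1, ε_3) := max{U_1, U_2}, where U_1 = −(√2/2)·√((1−ε_1)/ε_1 + √((1−ε_1)/ε_1)·√(ε_3/(1−ε_3))) and U_2 = −((2ε_2 + 4ε_1ε_3)/√(4ε_1ε_3(ε_2 + 4ε_1ε_3)))·√(ε_3/(1−ε_3)). -/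
/-!
Write `ε₂ = 1 - ε₁ - ε₃` and `V s = Var |X - s| = 1 + s² - (E |X - s|)²`. Then `V = 1` outside
`[μ₁, μ₃]`, while on `[μ₁, μ₂]` and on `[μ₂, μ₃]` it is `1 + branch ε₁ μ₁` and `1 + branch ε₃ μ₃`,
two upward parabolas; since `V μ₂ < 1`, every minimizer lies in `(μ₁, μ₃)`. The smallest minimizer
lies in `[μ₁, μ₂]` exactly when the right parabola increases on `[μ₂, μ₃]` (its vertex is at most
`μ₂`) or its minimum is at least that of the left one (whose vertex is then automatically at most
`μ₂`). Eliminating `μ₂` from the moment equations makes `μ₃` the larger root of a quadratic with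
coefficients in `μ₁`; evaluating that quadratic at the threshold each condition imposes on `μ₃`
turns the conditions into `μ₁ ≤ U₂` and `μ₁ ≤ U₁`.
-/

open MeasureTheory ProbabilityTheory

theorem integral_threeDirac {ε₁ ε₂ ε₃ : ℝ} (h₁ : 0 ≤ ε₁) (h₂ : 0 ≤ ε₂) (h₃ : 0 ≤ ε₃)
    (μ₁ μ₂ μ₃ : ℝ) (f : ℝ → ℝ) :
    ∫ x, f x ∂(ENNReal.ofReal ε₁ • Measure.dirac μ₁ + ENNReal.ofReal ε₂ • Measure.dirac μ₂ +
      ENNReal.ofReal ε₃ • Measure.dirac μ₃) = ε₁ * f μ₁ + ε₂ * f μ₂ + ε₃ * f μ₃ := by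
  have hf : ∀ c a : ℝ, Integrable f (ENNReal.ofReal c • Measure.dirac a) := fun c a =>
    (integrable_dirac (by simp)).smul_measure ENNReal.ofReal_ne_top
  rw [integral_add_measure ((hf _ _).add_measure (hf _ _)) (hf _ _),
    integral_add_measure (hf _ _) (hf _ _)]
  simp [h₁, h₂, h₃]

theorem variance_abs_sub_threeDirac {ε₁ ε₂ ε₃ : ℝ} (h₁ : 0 ≤ ε₁) (h₂ : 0 ≤ ε₂) (h₃ : 0 ≤ ε₃)
    (hsum : ε₁ + ε₂ + ε₃ = 1) (μ₁ μ₂ μ₃ s : ℝ) :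
    variance (fun x => |x - s|) (ENNReal.ofReal ε₁ • Measure.dirac μ₁ +
      ENNReal.ofReal ε₂ • Measure.dirac μ₂ + ENNReal.ofReal ε₃ • Measure.dirac μ₃) =
      (ε₁ * (μ₁ - s) ^ 2 + ε₂ * (μ₂ - s) ^ 2 + ε₃ * (μ₃ - s) ^ 2)
        - (ε₁ * |μ₁ - s| + ε₂ * |μ₂ - s| + ε₃ * |μ₃ - s|) ^ 2 := by
  rw [variance_eq_integral (by fun_prop), integral_threeDirac h₁ h₂ h₃,
    integral_threeDirac h₁ h₂ h₃]
  simp only [← sq_abs (μ₁ - s), ← sq_abs (μ₂ - s), ← sq_abs (μ₃ - s)]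
  linear_combination (ε₁ * |μ₁ - s| + ε₂ * |μ₂ - s| + ε₃ * |μ₃ - s|) ^ 2 * hsum

theorem le_iff_nonneg_of_quadratic_root {a b c r x : ℝ} (ha : 0 < a)
    (hr : a * r ^ 2 + b * r + c = 0) (hr' : 0 ≤ 2 * a * r + b) (hx : 0 ≤ 2 * a * x + b) :
    r ≤ x ↔ 0 ≤ a * x ^ 2 + b * x + c := by
  have hdiff : a * x ^ 2 + b * x + c = (x - r) * (a * (x + r) + b) := by
    linear_combination hr
  rw [hdiff]
  constructor
  · intro hrx
    exact mul_nonneg (sub_nonneg.2 hrx) (by nlinarith)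
  · intro h
    by_contra! hxr
    have : (x - r) * (a * (x + r) + b) < 0 := mul_neg_of_neg_of_pos (by linarith) (by nlinarith)
    linarith

theorem le_neg_iff_sq_le {m y : ℝ} (hm : m ≤ 0) (hy : 0 ≤ y) : m ≤ -y ↔ y ^ 2 ≤ m ^ 2 := by
  rw [le_neg, ← neg_sq m, pow_le_pow_iff_left₀ hy (neg_nonneg.2 hm) two_ne_zero]

namespace ThreePoint

/-- `1 + branch ε ν s = 1 + s² - (s - 2 ε (s - ν))²` is `Var |X - s|` for a standardized `X`
when `ν`, of mass `ε`, is the only atom on its side of `s`. -/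
def branch (ε ν s : ℝ) : ℝ := 4 * ε * ((1 - ε) * s + ε * ν) * (s - ν)

noncomputable def vertex (ε ν : ℝ) : ℝ := (1 - 2 * ε) * ν / (2 * (1 - ε))

theorem branch_vertex {ε : ℝ} (hε : ε ≠ 1) (ν : ℝ) :
    branch ε ν (vertex ε ν) = -(ε * ν ^ 2 / (1 - ε)) := by
  have : 1 - ε ≠ 0 := sub_ne_zero.2 hε.symm
  unfold branch vertex
  field_simp
  ring

theorem branch_eq_vertex_form {ε : ℝ} (hε : ε ≠ 1) (ν s : ℝ) :
    branch ε ν s = 4 * ε * (1 - ε) * (s - vertex ε ν) ^ 2 + branch ε ν (vertex ε ν) := by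
  have : 1 - ε ≠ 0 := sub_ne_zero.2 hε.symm
  rw [branch_vertex hε]
  unfold branch vertex
  field_simp
  ring

theorem branch_self (ε ν : ℝ) : branch ε ν ν = 0 := by
  simp [branch]

section Parabola

variable {ε : ℝ} (hε₀ : 0 ≤ ε) (hε₁ : ε < 1) (ν : ℝ)
include hε₀ hε₁

theorem branch_vertex_le (s : ℝ) : branch ε ν (vertex ε ν) ≤ branch ε ν s := by
  rw [branch_eq_vertex_form hε₁.ne ν s]
  have : 0 ≤ 4 * ε * (1 - ε) := by nlinarith
  nlinarith [mul_nonneg this (sq_nonneg (s - vertex ε ν))]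

theorem branch_vertex_nonpos : branch ε ν (vertex ε ν) ≤ 0 :=
  (branch_vertex_le hε₀ hε₁ ν ν).trans_eq (branch_self ε ν)

theorem branch_le_branch_of_vertex_le {u s : ℝ} (hu : vertex ε ν ≤ u) (hus : u ≤ s) :
    branch ε ν u ≤ branch ε ν s := by
  rw [branch_eq_vertex_form hε₁.ne ν s, branch_eq_vertex_form hε₁.ne ν u]
  have : 0 ≤ 4 * ε * (1 - ε) := by nlinarith
  gcongr

theorem branch_le_branch_of_le_vertex {u s : ℝ} (hs : s ≤ vertex ε ν) (hus : u ≤ s) :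
    branch ε ν s ≤ branch ε ν u := by
  rw [branch_eq_vertex_form hε₁.ne ν s, branch_eq_vertex_form hε₁.ne ν u]
  have : 0 ≤ 4 * ε * (1 - ε) := by nlinarith
  gcongr ?_ * ?_ + _
  nlinarith

end Parabola

def varAbsSub (ε₁ ε₃ μ₁ μ₂ μ₃ s : ℝ) : ℝ :=
  (ε₁ * (μ₁ - s) ^ 2 + (1 - ε₁ - ε₃) * (μ₂ - s) ^ 2 + ε₃ * (μ₃ - s) ^ 2)
    - (ε₁ * |μ₁ - s| + (1 - ε₁ - ε₃) * |μ₂ - s| + ε₃ * |μ₃ - s|) ^ 2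

/-- Eliminating `μ₂` from the moment equations leaves `mu3Quadratic ε₁ ε₃ μ₁ μ₃ = 0`, and `μ₃` is
its larger root. -/
def mu3Quadratic (ε₁ ε₃ μ₁ x : ℝ) : ℝ :=
  ε₃ * (1 - ε₁) * x ^ 2 + 2 * ε₁ * ε₃ * μ₁ * x + (ε₁ * (1 - ε₃) * μ₁ ^ 2 - (1 - ε₁ - ε₃))

theorem mu3Quadratic_neg_div_mul {ε₁ ε₃ k l : ℝ} (hk : k ≠ 0) (hl : l ≠ 0)
    (hk2 : ε₁ * k ^ 2 = 1 - ε₁) (hl2 : (1 - ε₃) * l ^ 2 = ε₃) (μ₁ : ℝ) :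
    mu3Quadratic ε₁ ε₃ μ₁ (-μ₁ / (k * l))
      = ε₁ * (1 - ε₃) * (k - l) / k * (2 * μ₁ ^ 2 - (k ^ 2 + k * l)) := by
  have hkl2 : ε₁ * (1 - ε₃) * (k * l) ^ 2 = ε₃ * (1 - ε₁) := by
    linear_combination (1 - ε₃) * l ^ 2 * hk2 + (1 - ε₁) * hl2
  have hε₂ : ε₁ * (1 - ε₃) * (k ^ 2 - l ^ 2) = 1 - ε₁ - ε₃ := by
    linear_combination (1 - ε₃) * hk2 - ε₁ * hl2
  refine mul_left_cancel₀ (by positivity : k * (k * l) ^ 2 ≠ 0) ?_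
  calc _ = k * (ε₃ * (1 - ε₁) * μ₁ ^ 2 - 2 * ε₁ * ε₃ * (k * l) * μ₁ ^ 2
          + (k * l) ^ 2 * (ε₁ * (1 - ε₃) * μ₁ ^ 2 - (1 - ε₁ - ε₃))) := by
        rw [mu3Quadratic]
        field_simp
        ring
    _ = ε₁ * (1 - ε₃) * k ^ 2 * l ^ 2 * (k - l) * (2 * μ₁ ^ 2 - (k ^ 2 + k * l)) := by
        linear_combination (-(k * μ₁ ^ 2)) * hkl2 + (2 * ε₁ * k ^ 2 * l * μ₁ ^ 2) * hl2
          + (k ^ 3 * l ^ 2) * hε₂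
    _ = _ := by
        field_simp

structure IsStandard (ε₁ ε₃ μ₁ μ₂ μ₃ : ℝ) : Prop where
  pos₁ : 0 < ε₁
  pos₂ : 0 < 1 - ε₁ - ε₃
  pos₃ : 0 < ε₃
  lt₁₂ : μ₁ < μ₂
  lt₂₃ : μ₂ < μ₃
  mean : ε₁ * μ₁ + (1 - ε₁ - ε₃) * μ₂ + ε₃ * μ₃ = 0
  second_moment : ε₁ * μ₁ ^ 2 + (1 - ε₁ - ε₃) * μ₂ ^ 2 + ε₃ * μ₃ ^ 2 = 1

namespace IsStandard

variable {ε₁ ε₃ μ₁ μ₂ μ₃ : ℝ} (h : IsStandard ε₁ ε₃ μ₁ μ₂ μ₃)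
include h

local notation "V" => varAbsSub ε₁ ε₃ μ₁ μ₂ μ₃

theorem mu1_neg : μ₁ < 0 := by
  nlinarith [h.pos₁, h.pos₂, h.pos₃, h.lt₁₂, h.lt₂₃, h.mean]

theorem mu3_pos : 0 < μ₃ := by
  nlinarith [h.pos₁, h.pos₂, h.pos₃, h.lt₁₂, h.lt₂₃, h.mean]

theorem varAbsSub_of_le_mu1 {s : ℝ} (hs : s ≤ μ₁) : V s = 1 := by
  have := h.lt₁₂; have := h.lt₂₃
  rw [varAbsSub, abs_of_nonneg (by linarith), abs_of_nonneg (by linarith),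
    abs_of_nonneg (by linarith)]
  linear_combination h.second_moment - (ε₁ * μ₁ + (1 - ε₁ - ε₃) * μ₂ + ε₃ * μ₃) * h.mean

theorem varAbsSub_of_mem_Icc_mu1_mu2 {s : ℝ} (hs : s ∈ Set.Icc μ₁ μ₂) :
    V s = 1 + branch ε₁ μ₁ s := by
  have := h.lt₂₃
  rw [varAbsSub, branch, abs_of_nonpos (by linarith [hs.1]), abs_of_nonneg (by linarith [hs.2]),
    abs_of_nonneg (by linarith [hs.2])]
  linear_combination h.second_moment
    + (-2 * s - 2 * ((2 * ε₁ - 1) * s - 2 * ε₁ * μ₁) - (ε₁ * μ₁ + (1 - ε₁ - ε₃) * μ₂ + ε₃ * μ₃))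
      * h.mean

theorem varAbsSub_of_mem_Icc_mu2_mu3 {s : ℝ} (hs : s ∈ Set.Icc μ₂ μ₃) :
    V s = 1 + branch ε₃ μ₃ s := by
  have := h.lt₁₂
  rw [varAbsSub, branch, abs_of_nonpos (by linarith [hs.1]), abs_of_nonpos (by linarith [hs.1]),
    abs_of_nonneg (by linarith [hs.2])]
  linear_combination h.second_moment
    + (-2 * s + 2 * ((1 - 2 * ε₃) * s + 2 * ε₃ * μ₃) - (ε₁ * μ₁ + (1 - ε₁ - ε₃) * μ₂ + ε₃ * μ₃))
      * h.mean

theorem varAbsSub_of_mu3_le {s : ℝ} (hs : μ₃ ≤ s) : V s = 1 := by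
  have := h.lt₁₂; have := h.lt₂₃
  rw [varAbsSub, abs_of_nonpos (by linarith), abs_of_nonpos (by linarith),
    abs_of_nonpos (by linarith)]
  linear_combination h.second_moment - (ε₁ * μ₁ + (1 - ε₁ - ε₃) * μ₂ + ε₃ * μ₃) * h.mean

theorem eps1_lt_one : ε₁ < 1 := by linarith [h.pos₂, h.pos₃]

theorem eps3_lt_one : ε₃ < 1 := by linarith [h.pos₁, h.pos₂]

theorem mu1_lt_vertex : μ₁ < vertex ε₁ μ₁ := by
  rw [vertex, lt_div_iff₀ (by linarith [h.eps1_lt_one])]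
  nlinarith [h.mu1_neg]

theorem vertex_lt_mu3 : vertex ε₃ μ₃ < μ₃ := by
  rw [vertex, div_lt_iff₀ (by linarith [h.eps3_lt_one])]
  nlinarith [h.mu3_pos]

theorem varAbsSub_mu2_lt_one : V μ₂ < 1 := by
  rw [h.varAbsSub_of_mem_Icc_mu1_mu2 ⟨h.lt₁₂.le, le_rfl⟩, branch]
  have : (1 - ε₁) * μ₂ + ε₁ * μ₁ = -(ε₃ * (μ₃ - μ₂)) := by linear_combination h.mean
  rw [this]
  have := mul_pos (mul_pos (mul_pos h.pos₁ h.pos₃) (sub_pos.2 h.lt₂₃)) (sub_pos.2 h.lt₁₂)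
  nlinarith

theorem one_add_branch_vertex_le_of_le_mu2 {s : ℝ} (hs : s ≤ μ₂) :
    1 + branch ε₁ μ₁ (vertex ε₁ μ₁) ≤ V s := by
  rcases le_or_gt s μ₁ with hs₁ | hs₁
  · rw [h.varAbsSub_of_le_mu1 hs₁]
    linarith [branch_vertex_nonpos h.pos₁.le h.eps1_lt_one μ₁]
  · rw [h.varAbsSub_of_mem_Icc_mu1_mu2 ⟨hs₁.le, hs⟩]
    linarith [branch_vertex_le h.pos₁.le h.eps1_lt_one μ₁ s]

theorem one_add_branch_vertex_le_of_mu2_le {s : ℝ} (hs : μ₂ ≤ s) :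
    1 + branch ε₃ μ₃ (vertex ε₃ μ₃) ≤ V s := by
  rcases le_or_gt μ₃ s with hs₃ | hs₃
  · rw [h.varAbsSub_of_mu3_le hs₃]
    linarith [branch_vertex_nonpos h.pos₃.le h.eps3_lt_one μ₃]
  · rw [h.varAbsSub_of_mem_Icc_mu2_mu3 ⟨hs, hs₃.le⟩]
    linarith [branch_vertex_le h.pos₃.le h.eps3_lt_one μ₃ s]

theorem varAbsSub_mu2_le_of_le (hv : μ₂ ≤ vertex ε₁ μ₁) {s : ℝ} (hs : s ≤ μ₂) :
    V μ₂ ≤ V s := by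
  rcases le_or_gt s μ₁ with hs₁ | hs₁
  · rw [h.varAbsSub_of_le_mu1 hs₁]
    exact h.varAbsSub_mu2_lt_one.le
  · rw [h.varAbsSub_of_mem_Icc_mu1_mu2 ⟨hs₁.le, hs⟩,
      h.varAbsSub_of_mem_Icc_mu1_mu2 ⟨h.lt₁₂.le, le_rfl⟩]
    linarith [branch_le_branch_of_le_vertex h.pos₁.le h.eps1_lt_one μ₁ hv hs]

theorem varAbsSub_mu2_le_of_ge (hv : vertex ε₃ μ₃ ≤ μ₂) {s : ℝ} (hs : μ₂ ≤ s) :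
    V μ₂ ≤ V s := by
  rcases le_or_gt μ₃ s with hs₃ | hs₃
  · rw [h.varAbsSub_of_mu3_le hs₃]
    exact h.varAbsSub_mu2_lt_one.le
  · rw [h.varAbsSub_of_mem_Icc_mu2_mu3 ⟨hs, hs₃.le⟩,
      h.varAbsSub_of_mem_Icc_mu2_mu3 ⟨le_rfl, h.lt₂₃.le⟩]
    linarith [branch_le_branch_of_vertex_le h.pos₃.le h.eps3_lt_one μ₃ hv hs]

theorem branch_vertex_le_iff :
    branch ε₁ μ₁ (vertex ε₁ μ₁) ≤ branch ε₃ μ₃ (vertex ε₃ μ₃) ↔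
      ε₃ * (1 - ε₁) * μ₃ ^ 2 ≤ ε₁ * (1 - ε₃) * μ₁ ^ 2 := by
  rw [branch_vertex h.eps1_lt_one.ne, branch_vertex h.eps3_lt_one.ne, neg_le_neg_iff,
    div_le_div_iff₀ (by linarith [h.eps3_lt_one]) (by linarith [h.eps1_lt_one])]
  constructor <;> intro <;> linarith

theorem vertex_le_mu2_of_branch_vertex_le
    (hD : branch ε₁ μ₁ (vertex ε₁ μ₁) ≤ branch ε₃ μ₃ (vertex ε₃ μ₃)) :
    vertex ε₁ μ₁ ≤ μ₂ := by
  rw [h.branch_vertex_le_iff] at hD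
  have := h.pos₁; have := h.pos₂; have := h.pos₃; have hμ₁ := h.mu1_neg; have hμ₃ := h.mu3_pos
  have he₁ : 0 < 1 - ε₁ := by linarith
  set d := 1 - ε₁ - ε₃ + 2 * ε₁ * ε₃
  have hsq : (2 * ε₃ * (1 - ε₁) * μ₃) ^ 2 ≤ (d * -μ₁) ^ 2 :=
    calc (2 * ε₃ * (1 - ε₁) * μ₃) ^ 2 = 4 * ε₃ * (1 - ε₁) * (ε₃ * (1 - ε₁) * μ₃ ^ 2) := by ring
      _ ≤ 4 * ε₃ * (1 - ε₁) * (ε₁ * (1 - ε₃) * μ₁ ^ 2) := by gcongr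
      _ = (d ^ 2 - (1 - ε₁ - ε₃) ^ 2) * μ₁ ^ 2 := by ring
      _ ≤ (d * -μ₁) ^ 2 := by nlinarith [sq_nonneg ((1 - ε₁ - ε₃) * μ₁)]
  have hkey : 2 * ε₃ * (1 - ε₁) * μ₃ ≤ d * -μ₁ :=
    (pow_le_pow_iff_left₀ (by positivity) (mul_nonneg (by positivity) (by linarith))
      two_ne_zero).1 hsq
  have : 0 ≤ (1 - ε₁ - ε₃) * (2 * (1 - ε₁) * μ₂ - (1 - 2 * ε₁) * μ₁) := by
    linear_combination hkey - 2 * (1 - ε₁) * h.mean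
  rw [vertex, div_le_iff₀ (by linarith)]
  linarith [(mul_nonneg_iff_of_pos_left h.pos₂).1 this]

theorem exists_minimizer_le_mu2
    (hC : vertex ε₃ μ₃ ≤ μ₂ ∨ branch ε₁ μ₁ (vertex ε₁ μ₁) ≤ branch ε₃ μ₃ (vertex ε₃ μ₃)) :
    ∃ m ≤ μ₂, ∀ s, V m ≤ V s := by
  by_cases hv : vertex ε₁ μ₁ ≤ μ₂
  · have hVv : V (vertex ε₁ μ₁) = 1 + branch ε₁ μ₁ (vertex ε₁ μ₁) :=
      h.varAbsSub_of_mem_Icc_mu1_mu2 ⟨h.mu1_lt_vertex.le, hv⟩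
    refine ⟨vertex ε₁ μ₁, hv, fun s => ?_⟩
    rcases le_total s μ₂ with hs | hs
    · exact hVv.trans_le (h.one_add_branch_vertex_le_of_le_mu2 hs)
    rcases hC with hC | hC
    · calc V (vertex ε₁ μ₁) ≤ V μ₂ := hVv.trans_le (h.one_add_branch_vertex_le_of_le_mu2 le_rfl)
        _ ≤ V s := h.varAbsSub_mu2_le_of_ge hC hs
    · linarith [h.one_add_branch_vertex_le_of_mu2_le hs]
  · have hC : vertex ε₃ μ₃ ≤ μ₂ :=
      hC.resolve_right fun hD => hv (h.vertex_le_mu2_of_branch_vertex_le hD)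
    refine ⟨μ₂, le_rfl, fun s => ?_⟩
    rcases le_total s μ₂ with hs | hs
    · exact h.varAbsSub_mu2_le_of_le (not_le.1 hv).le hs
    · exact h.varAbsSub_mu2_le_of_ge hC hs

theorem mu1_lt_of_minimizer {m : ℝ} (hm : ∀ s, V m ≤ V s) : μ₁ < m := by
  by_contra! hm₁
  have := hm μ₂
  rw [h.varAbsSub_of_le_mu1 hm₁] at this
  exact this.not_gt h.varAbsSub_mu2_lt_one

theorem mem_Icc_iff_of_isLeast {s₀ : ℝ} (hs₀ : IsLeast {m | ∀ s, V m ≤ V s} s₀) :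
    s₀ ∈ Set.Icc μ₁ μ₂ ↔
      vertex ε₃ μ₃ ≤ μ₂ ∨ branch ε₁ μ₁ (vertex ε₁ μ₁) ≤ branch ε₃ μ₃ (vertex ε₃ μ₃) := by
  have hμ₁ := h.mu1_lt_of_minimizer hs₀.1
  constructor
  · intro hs
    by_contra! hC
    obtain ⟨hv, hD⟩ := hC
    have hVv : V (vertex ε₃ μ₃) = 1 + branch ε₃ μ₃ (vertex ε₃ μ₃) :=
      h.varAbsSub_of_mem_Icc_mu2_mu3 ⟨hv.le, h.vertex_lt_mu3.le⟩
    have := h.one_add_branch_vertex_le_of_le_mu2 hs.2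
    linarith [hs₀.1 (vertex ε₃ μ₃)]
  · intro hC
    obtain ⟨m, hmμ₂, hm⟩ := h.exists_minimizer_le_mu2 hC
    exact ⟨hμ₁.le, (hs₀.2 hm).trans hmμ₂⟩

theorem one_sub_eps1_mul_mu3_add_pos : 0 < (1 - ε₁) * μ₃ + ε₁ * μ₁ := by
  linear_combination -h.mean + mul_pos h.pos₂ (sub_pos.2 h.lt₂₃)

theorem mu3_le_iff {x : ℝ} (hx : 0 ≤ (1 - ε₁) * x + ε₁ * μ₁) :
    μ₃ ≤ x ↔ 0 ≤ mu3Quadratic ε₁ ε₃ μ₁ x := by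
  have := h.pos₁; have := h.pos₂; have := h.pos₃
  refine le_iff_nonneg_of_quadratic_root (by nlinarith) ?_ ?_ ?_
  · linear_combination (1 - ε₁ - ε₃) * h.second_moment
      + (ε₁ * μ₁ + ε₃ * μ₃ - (1 - ε₁ - ε₃) * μ₂) * h.mean
  · nlinarith [h.one_sub_eps1_mul_mu3_add_pos]
  · nlinarith

theorem vertex_le_mu2_iff :
    vertex ε₃ μ₃ ≤ μ₂ ↔
      μ₁ ≤ -((2 * (1 - ε₁ - ε₃) + 4 * ε₁ * ε₃) /
        √(4 * ε₁ * ε₃ * (1 - ε₁ - ε₃ + 4 * ε₁ * ε₃))) * √(ε₃ / (1 - ε₃)) := by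
  have := h.pos₁; have := h.pos₂; have := h.pos₃; have hμ₁ := h.mu1_neg
  have he₃ : 0 < 1 - ε₃ := by linarith
  set d := 1 - ε₁ - ε₃ + 2 * ε₁ * ε₃
  set Q := 1 - ε₁ - ε₃ + 4 * ε₁ * ε₃
  have hd : 0 < d := by positivity
  have hQ : 0 < Q := by positivity
  have hlin : (1 - ε₁ - ε₃) * (2 * (1 - ε₃) * μ₂ - (1 - 2 * ε₃) * μ₃)
      = -2 * ε₁ * (1 - ε₃) * μ₁ - d * μ₃ := by
    linear_combination 2 * (1 - ε₃) * h.mean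
  have hG : mu3Quadratic ε₁ ε₃ μ₁ (-2 * ε₁ * (1 - ε₃) * μ₁ / d)
      = (1 - ε₁ - ε₃) / d ^ 2 * (ε₁ * (1 - ε₃) * Q * μ₁ ^ 2 - d ^ 2) := by
    rw [mu3Quadratic]
    field_simp
    ring
  have hU : ((2 * (1 - ε₁ - ε₃) + 4 * ε₁ * ε₃) / √(4 * ε₁ * ε₃ * Q) * √(ε₃ / (1 - ε₃))) ^ 2
      = d ^ 2 / (ε₁ * (1 - ε₃) * Q) := by
    rw [mul_pow, div_pow, Real.sq_sqrt (by positivity), Real.sq_sqrt (by positivity)]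
    field_simp
    ring
  calc vertex ε₃ μ₃ ≤ μ₂ ↔ μ₃ ≤ -2 * ε₁ * (1 - ε₃) * μ₁ / d := by
        rw [vertex, div_le_iff₀ (by linarith), le_div_iff₀ hd]
        constructor <;> intro <;> nlinarith
    _ ↔ 0 ≤ (1 - ε₁ - ε₃) / d ^ 2 * (ε₁ * (1 - ε₃) * Q * μ₁ ^ 2 - d ^ 2) := by
        rw [← hG]
        refine h.mu3_le_iff ?_
        have : (1 - ε₁) * (-2 * ε₁ * (1 - ε₃) * μ₁ / d) + ε₁ * μ₁
            = ε₁ * (1 - ε₁ - ε₃) * (-μ₁) / d := by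
          field_simp
          ring
        rw [this]
        exact div_nonneg (mul_nonneg (by positivity) (by linarith)) hd.le
    _ ↔ d ^ 2 / (ε₁ * (1 - ε₃) * Q) ≤ μ₁ ^ 2 := by
        rw [mul_nonneg_iff_of_pos_left (by positivity), sub_nonneg, div_le_iff₀ (by positivity),
          mul_comm]
    _ ↔ _ := by
        rw [neg_mul, le_neg_iff_sq_le hμ₁.le (by positivity), hU]

theorem branch_vertex_le_iff_mu1_le :
    branch ε₁ μ₁ (vertex ε₁ μ₁) ≤ branch ε₃ μ₃ (vertex ε₃ μ₃) ↔
      μ₁ ≤ -(√2 / 2) * √((1 - ε₁) / ε₁ + √((1 - ε₁) / ε₁) * √(ε₃ / (1 - ε₃))) := by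
  have := h.pos₁; have := h.pos₂; have := h.pos₃; have hμ₁ := h.mu1_neg; have hμ₃ := h.mu3_pos
  have he₁ : 0 < 1 - ε₁ := by linarith
  have he₃ : 0 < 1 - ε₃ := by linarith
  set k := √((1 - ε₁) / ε₁)
  set l := √(ε₃ / (1 - ε₃))
  have hk : 0 < k := Real.sqrt_pos.2 (by positivity)
  have hl : 0 < l := Real.sqrt_pos.2 (by positivity)
  have hk2 : k ^ 2 = (1 - ε₁) / ε₁ := Real.sq_sqrt (by positivity)
  have hl2 : l ^ 2 = ε₃ / (1 - ε₃) := Real.sq_sqrt (by positivity)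
  have hkl : l < k := by
    rw [← pow_lt_pow_iff_left₀ hl.le hk.le two_ne_zero, hk2, hl2,
      div_lt_div_iff₀ he₃ (by positivity)]
    nlinarith
  have hk2' : ε₁ * k ^ 2 = 1 - ε₁ := by rw [hk2]; field_simp
  have hl2' : (1 - ε₃) * l ^ 2 = ε₃ := by rw [hl2]; field_simp
  have hkl2 : ε₁ * (1 - ε₃) * (k * l) ^ 2 = ε₃ * (1 - ε₁) := by
    linear_combination (1 - ε₃) * l ^ 2 * hk2' + (1 - ε₁) * hl2'
  have hx : (1 - ε₁) * (-μ₁ / (k * l)) + ε₁ * μ₁ = ε₁ * (-μ₁) * (k - l) / l := by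
    rw [← hk2']
    field_simp
    ring
  calc branch ε₁ μ₁ (vertex ε₁ μ₁) ≤ branch ε₃ μ₃ (vertex ε₃ μ₃)
        ↔ ε₃ * (1 - ε₁) * μ₃ ^ 2 ≤ ε₁ * (1 - ε₃) * μ₁ ^ 2 := h.branch_vertex_le_iff
    _ ↔ μ₃ ≤ -μ₁ / (k * l) := by
        rw [le_div_iff₀ (by positivity), le_neg, le_neg_iff_sq_le hμ₁.le (by positivity),
          ← hkl2, show ε₁ * (1 - ε₃) * (k * l) ^ 2 * μ₃ ^ 2 = ε₁ * (1 - ε₃) * (μ₃ * (k * l)) ^ 2 by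
            ring, mul_le_mul_iff_of_pos_left (by positivity)]
    _ ↔ 0 ≤ ε₁ * (1 - ε₃) * (k - l) / k * (2 * μ₁ ^ 2 - (k ^ 2 + k * l)) := by
        rw [← mu3Quadratic_neg_div_mul hk.ne' hl.ne' hk2' hl2']
        refine h.mu3_le_iff ?_
        rw [hx]
        exact div_nonneg (mul_nonneg (mul_nonneg (by positivity) (by linarith)) (by linarith)) hl.le
    _ ↔ (√2 / 2 * √((1 - ε₁) / ε₁ + k * l)) ^ 2 ≤ μ₁ ^ 2 := by
        have : 0 < ε₁ * (1 - ε₃) * (k - l) / k := div_pos (mul_pos (by positivity) (by linarith)) hk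
        rw [mul_nonneg_iff_of_pos_left this, sub_nonneg, hk2, mul_pow, div_pow,
          Real.sq_sqrt zero_le_two, Real.sq_sqrt (by positivity)]
        constructor <;> intro <;> linarith
    _ ↔ _ := by
        rw [neg_mul, le_neg_iff_sq_le hμ₁.le (by positivity)]

end IsStandard

end ThreePoint

/-- Let `X` be a standardized 3-Dirac mixture with ordered locations
`μ₁ < μ₂ < μ₃` and probabilities `ε₁, ε₂, ε₃ > 0` summing to `1`, and let `s⋆` be the smallest
minimizer of `s ↦ Var |X - s|`. Then `s⋆ ∈ [μ₁, μ₂]` if and only if `μ₁ ≤ max {U₁, U₂}`,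
where `U₁ = -(√2/2) √((1-ε₁)/ε₁ + √((1-ε₁)/ε₁) √(ε₃/(1-ε₃)))` and
`U₂ = -((2ε₂ + 4ε₁ε₃)/√(4ε₁ε₃(ε₂ + 4ε₁ε₃))) √(ε₃/(1-ε₃))`. -/
theorem stmt_16 (ε₁ ε₂ ε₃ μ₁ μ₂ μ₃ : ℝ)
    (hε₁ : 0 < ε₁) (hε₂ : 0 < ε₂) (hε₃ : 0 < ε₃) (hsum : ε₁ + ε₂ + ε₃ = 1)
    (h12 : μ₁ < μ₂) (h23 : μ₂ < μ₃)
    (P : Measure ℝ)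
    (hP : P = ENNReal.ofReal ε₁ • Measure.dirac μ₁ + ENNReal.ofReal ε₂ • Measure.dirac μ₂ +
      ENNReal.ofReal ε₃ • Measure.dirac μ₃)
    (hmean : ∫ x, x ∂P = 0) (hm2 : ∫ x, x ^ 2 ∂P = 1)
    (sstar : ℝ)
    (hmin : ∀ s : ℝ, variance (fun x => |x - sstar|) P ≤ variance (fun x => |x - s|) P)
    (hleast : ∀ t : ℝ,
      (∀ s : ℝ, variance (fun x => |x - t|) P ≤ variance (fun x => |x - s|) P) → sstar ≤ t) :
    sstar ∈ Set.Icc μ₁ μ₂ ↔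
      μ₁ ≤ max
        (-(Real.sqrt 2 / 2) * Real.sqrt ((1 - ε₁) / ε₁ +
          Real.sqrt ((1 - ε₁) / ε₁) * Real.sqrt (ε₃ / (1 - ε₃))))
        (-((2 * ε₂ + 4 * ε₁ * ε₃) / Real.sqrt (4 * ε₁ * ε₃ * (ε₂ + 4 * ε₁ * ε₃))) *
          Real.sqrt (ε₃ / (1 - ε₃))) := by
  obtain rfl : ε₂ = 1 - ε₁ - ε₃ := by linarith
  subst hP
  simp only [variance_abs_sub_threeDirac hε₁.le hε₂.le hε₃.le hsum] at hmin hleast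
  rw [integral_threeDirac hε₁.le hε₂.le hε₃.le] at hmean hm2
  have h : ThreePoint.IsStandard ε₁ ε₃ μ₁ μ₂ μ₃ :=
    ⟨hε₁, hε₂, hε₃, h12, h23, hmean, hm2⟩
  rw [h.mem_Icc_iff_of_isLeast ⟨hmin, hleast⟩, le_max_iff, ← h.vertex_le_mu2_iff,
    ← h.branch_vertex_le_iff_mu1_le, or_comm]
end

section
/- Let X be a standardized 3-Dirac mixture with ordered locations μ_1 < μ_2 < μ_3 and probabilities ε_1, ε_2, ε_3 > 0 summing to 1, and let s* denote the smallest minimizer of s ↦ Var|X − s|. Assume s* ∈ [μ_1, μ_2]. Then Φ*(X) = 4 · min_{s ∈ ℝ} Var|X − s| ≥ 1 if and only if μ_1 ≥ F(ε_1), where F(ε_1) = −(√3/2)·√((1 − ε_1)/ε_1). -/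
/-!
On `[μ₁, μ₂]` the map `s ↦ Var |X - s|` is the quadratic
`g s = 1 + s² - ((2ε₁ - 1) s - 2ε₁μ₁)²`, because there `E |X - s|` is the signed sum
`-ε₁ (μ₁ - s) + ε₂ (μ₂ - s) + ε₃ (μ₃ - s)`. Everywhere else the signed sum is at most `E |X - s|` in
absolute value, so `Var |X - s| ≤ g s` for all `s`. As the minimizer `s⋆` lies in `[μ₁, μ₂]`, the
minimum of the folded variance is the minimum of `g`, namely `1 - ε₁μ₁² / (1 - ε₁)`, and
`4 (1 - ε₁μ₁² / (1 - ε₁)) ≥ 1` means `μ₁² ≤ 3 (1 - ε₁) / (4ε₁)`; finally `μ₁ ≤ 0` since `E X = 0`.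
-/

open MeasureTheory ProbabilityTheory

section ThreePointMeasure

variable {α : Type*} [MeasurableSpace α]

lemma integrable_three_dirac [MeasurableSingletonClass α] (ε₁ ε₂ ε₃ : ℝ) (a₁ a₂ a₃ : α)
    (f : α → ℝ) :
    Integrable f (ENNReal.ofReal ε₁ • Measure.dirac a₁ + ENNReal.ofReal ε₂ • Measure.dirac a₂ +
      ENNReal.ofReal ε₃ • Measure.dirac a₃) := by
  have hd : ∀ a : α, Integrable f (Measure.dirac a) := fun _ => integrable_dirac enorm_lt_top
  exact (((hd a₁).smul_measure ENNReal.ofReal_ne_top).add_measure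
    ((hd a₂).smul_measure ENNReal.ofReal_ne_top)).add_measure
    ((hd a₃).smul_measure ENNReal.ofReal_ne_top)

lemma integral_three_dirac [MeasurableSingletonClass α] {ε₁ ε₂ ε₃ : ℝ} (h₁ : 0 ≤ ε₁)
    (h₂ : 0 ≤ ε₂) (h₃ : 0 ≤ ε₃) (a₁ a₂ a₃ : α) (f : α → ℝ) :
    ∫ x, f x ∂(ENNReal.ofReal ε₁ • Measure.dirac a₁ + ENNReal.ofReal ε₂ • Measure.dirac a₂ +
      ENNReal.ofReal ε₃ • Measure.dirac a₃) = ε₁ * f a₁ + ε₂ * f a₂ + ε₃ * f a₃ := by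
  have hd : ∀ (ε : ℝ) (a : α), Integrable f (ENNReal.ofReal ε • Measure.dirac a) :=
    fun _ _ => (integrable_dirac enorm_lt_top).smul_measure ENNReal.ofReal_ne_top
  rw [integral_add_measure ((hd ε₁ a₁).add_measure (hd ε₂ a₂)) (hd ε₃ a₃),
    integral_add_measure (hd ε₁ a₁) (hd ε₂ a₂)]
  simp only [integral_smul_measure, integral_dirac, ENNReal.toReal_ofReal h₁,
    ENNReal.toReal_ofReal h₂, ENNReal.toReal_ofReal h₃, smul_eq_mul]

lemma isProbabilityMeasure_three_dirac {ε₁ ε₂ ε₃ : ℝ} (h₁ : 0 ≤ ε₁) (h₂ : 0 ≤ ε₂)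
    (h₃ : 0 ≤ ε₃) (hsum : ε₁ + ε₂ + ε₃ = 1) (a₁ a₂ a₃ : α) :
    IsProbabilityMeasure (ENNReal.ofReal ε₁ • Measure.dirac a₁ +
      ENNReal.ofReal ε₂ • Measure.dirac a₂ + ENNReal.ofReal ε₃ • Measure.dirac a₃) := by
  constructor
  simp only [Measure.coe_add, Pi.add_apply, Measure.smul_apply, smul_eq_mul,
    Measure.dirac_apply_of_mem (Set.mem_univ _), mul_one]
  rw [← ENNReal.ofReal_add h₁ h₂, ← ENNReal.ofReal_add (add_nonneg h₁ h₂) h₃, hsum,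
    ENNReal.ofReal_one]

lemma variance_three_dirac [MeasurableSingletonClass α] {ε₁ ε₂ ε₃ : ℝ} (h₁ : 0 ≤ ε₁)
    (h₂ : 0 ≤ ε₂) (h₃ : 0 ≤ ε₃) (hsum : ε₁ + ε₂ + ε₃ = 1) (a₁ a₂ a₃ : α) (f : α → ℝ) :
    variance f (ENNReal.ofReal ε₁ • Measure.dirac a₁ + ENNReal.ofReal ε₂ • Measure.dirac a₂ +
      ENNReal.ofReal ε₃ • Measure.dirac a₃) =
      (ε₁ * f a₁ ^ 2 + ε₂ * f a₂ ^ 2 + ε₃ * f a₃ ^ 2) -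
        (ε₁ * f a₁ + ε₂ * f a₂ + ε₃ * f a₃) ^ 2 := by
  have := isProbabilityMeasure_three_dirac h₁ h₂ h₃ hsum a₁ a₂ a₃
  have hf : MemLp f 2 _ := (memLp_two_iff_integrable_sq
    (integrable_three_dirac ε₁ ε₂ ε₃ a₁ a₂ a₃ f).1).2 (integrable_three_dirac ε₁ ε₂ ε₃ a₁ a₂ a₃ _)
  rw [variance_eq_sub hf, integral_three_dirac h₁ h₂ h₃, integral_three_dirac h₁ h₂ h₃]
  rfl

end ThreePointMeasure

lemma isLeast_range_add_sq_sub_sq {a : ℝ} (ha : a ^ 2 < 1) (b c : ℝ) :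
    IsLeast (Set.range fun s : ℝ => c + s ^ 2 - (a * s - b) ^ 2) (c - b ^ 2 / (1 - a ^ 2)) := by
  have hpos : 0 < 1 - a ^ 2 := by linarith
  refine ⟨⟨-(a * b) / (1 - a ^ 2), ?_⟩, ?_⟩
  · field_simp
    ring
  · rintro _ ⟨s, rfl⟩
    have hsq : s ^ 2 - (a * s - b) ^ 2 + b ^ 2 / (1 - a ^ 2) =
        ((1 - a ^ 2) * s + a * b) ^ 2 / (1 - a ^ 2) := by
      field_simp
      ring
    have : 0 ≤ ((1 - a ^ 2) * s + a * b) ^ 2 / (1 - a ^ 2) := by positivity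
    show c - b ^ 2 / (1 - a ^ 2) ≤ c + s ^ 2 - (a * s - b) ^ 2
    linarith

lemma ciInf_eq_of_isLeast_majorant {ι : Type*} {V g : ι → ℝ} {m : ℝ} {t : ι}
    (hmin : ∀ s, V t ≤ V s) (hVg : ∀ s, V s ≤ g s) (hVt : V t = g t)
    (hg : IsLeast (Set.range g) m) : ⨅ s, V s = m := by
  obtain ⟨⟨u, rfl⟩, hlow⟩ := hg
  have hVtu : V t = g u := le_antisymm ((hmin u).trans (hVg u)) (hVt ▸ hlow ⟨t, rfl⟩)
  have : Nonempty ι := ⟨t⟩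
  rw [← hVtu]
  exact le_antisymm (ciInf_le ⟨V t, by rintro _ ⟨s, rfl⟩; exact hmin s⟩ t) (le_ciInf hmin)

lemma one_le_four_mul_one_sub_iff {ε μ : ℝ} (hε : 0 < ε) (hε1 : ε < 1) (hμ : μ ≤ 0) :
    1 ≤ 4 * (1 - ε * μ ^ 2 / (1 - ε)) ↔ -(Real.sqrt 3 / 2) * Real.sqrt ((1 - ε) / ε) ≤ μ := by
  set R := Real.sqrt 3 / 2 * Real.sqrt ((1 - ε) / ε)
  have hR : 0 ≤ R := by positivity
  have hR2 : R ^ 2 = 3 * (1 - ε) / (4 * ε) := by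
    rw [mul_pow, div_pow, Real.sq_sqrt (by norm_num), Real.sq_sqrt (by bound)]
    field_simp
    ring
  have h1 : 1 ≤ 4 * (1 - ε * μ ^ 2 / (1 - ε)) ↔ μ ^ 2 ≤ R ^ 2 := by
    have hq : ε * μ ^ 2 / (1 - ε) * (1 - ε) = ε * μ ^ 2 :=
      div_mul_cancel₀ _ (sub_pos.2 hε1).ne'
    rw [hR2, le_div_iff₀ (by positivity)]
    constructor <;> intro h <;> nlinarith [sub_pos.2 hε1]
  rw [h1, sq_le_sq, abs_of_nonpos hμ, abs_of_nonneg hR, neg_mul]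
  exact neg_le

lemma sq_signed_sum_le_sq_abs_sum {ε₁ ε₂ ε₃ : ℝ} (h₁ : 0 ≤ ε₁) (h₂ : 0 ≤ ε₂) (h₃ : 0 ≤ ε₃)
    (d₁ d₂ d₃ : ℝ) :
    (-(ε₁ * d₁) + ε₂ * d₂ + ε₃ * d₃) ^ 2 ≤ (ε₁ * |d₁| + ε₂ * |d₂| + ε₃ * |d₃|) ^ 2 := by
  rw [sq_le_sq, abs_of_nonneg (by positivity : 0 ≤ ε₁ * |d₁| + ε₂ * |d₂| + ε₃ * |d₃|)]
  calc |-(ε₁ * d₁) + ε₂ * d₂ + ε₃ * d₃|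
      ≤ |-(ε₁ * d₁)| + |ε₂ * d₂| + |ε₃ * d₃| := abs_add_three _ _ _
    _ = ε₁ * |d₁| + ε₂ * |d₂| + ε₃ * |d₃| := by
      simp only [abs_neg, abs_mul, abs_of_nonneg h₁, abs_of_nonneg h₂, abs_of_nonneg h₃]

theorem stmt_17_general (ε₁ ε₂ ε₃ μ₁ μ₂ μ₃ : ℝ)
    (hε₁ : 0 < ε₁) (hε₂ : 0 < ε₂) (hε₃ : 0 < ε₃) (hsum : ε₁ + ε₂ + ε₃ = 1)
    (h23 : μ₂ < μ₃)
    (P : Measure ℝ)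
    (hP : P = ENNReal.ofReal ε₁ • Measure.dirac μ₁ + ENNReal.ofReal ε₂ • Measure.dirac μ₂ +
      ENNReal.ofReal ε₃ • Measure.dirac μ₃)
    (hmean : ∫ x, x ∂P = 0) (hm2 : ∫ x, x ^ 2 ∂P = 1)
    (sstar : ℝ)
    (hmin : ∀ s : ℝ, variance (fun x => |x - sstar|) P ≤ variance (fun x => |x - s|) P)
    (hmem : sstar ∈ Set.Icc μ₁ μ₂) :
    1 ≤ 4 * (⨅ s : ℝ, variance (fun x => |x - s|) P) ↔
      -(Real.sqrt 3 / 2) * Real.sqrt ((1 - ε₁) / ε₁) ≤ μ₁ := by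
  rw [hP, integral_three_dirac hε₁.le hε₂.le hε₃.le] at hmean hm2
  have hμ₁ : μ₁ ≤ 0 := by
    nlinarith [mul_nonneg hε₂.le (sub_nonneg.2 (hmem.1.trans hmem.2)),
      mul_nonneg hε₃.le (sub_nonneg.2 (hmem.1.trans (hmem.2.trans h23.le)))]
  have hvar : ∀ s, variance (fun x => |x - s|) P =
      1 + s ^ 2 - (ε₁ * |μ₁ - s| + ε₂ * |μ₂ - s| + ε₃ * |μ₃ - s|) ^ 2 := by
    intro s
    rw [hP, variance_three_dirac hε₁.le hε₂.le hε₃.le hsum]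
    simp only [sq_abs]
    linear_combination hm2 - 2 * s * hmean + s ^ 2 * hsum
  set g : ℝ → ℝ := fun s => 1 + s ^ 2 - ((2 * ε₁ - 1) * s - 2 * ε₁ * μ₁) ^ 2
  have hsigned : ∀ s, -(ε₁ * (μ₁ - s)) + ε₂ * (μ₂ - s) + ε₃ * (μ₃ - s) =
      (2 * ε₁ - 1) * s - 2 * ε₁ * μ₁ := fun s => by
    linear_combination hmean - s * hsum
  have hVg : ∀ s, variance (fun x => |x - s|) P ≤ g s := fun s => by
    simp only [hvar, g, ← hsigned]
    linarith [sq_signed_sum_le_sq_abs_sum hε₁.le hε₂.le hε₃.le (μ₁ - s) (μ₂ - s) (μ₃ - s)]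
  have hVg_sstar : variance (fun x => |x - sstar|) P = g sstar := by
    rw [hvar, abs_of_nonpos (sub_nonpos.2 hmem.1), abs_of_nonneg (sub_nonneg.2 hmem.2),
      abs_of_nonneg (sub_nonneg.2 (hmem.2.trans h23.le))]
    simp only [g, ← hsigned]
    ring
  have hg : IsLeast (Set.range g) (1 - ε₁ * μ₁ ^ 2 / (1 - ε₁)) := by
    have hε₁' : 0 < 1 - ε₁ := by linarith
    convert isLeast_range_add_sq_sub_sq (a := 2 * ε₁ - 1) (by nlinarith) (2 * ε₁ * μ₁) 1 using 2
    rw [show (1 : ℝ) - (2 * ε₁ - 1) ^ 2 = 4 * ε₁ * (1 - ε₁) by ring]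
    field_simp
    ring
  rw [ciInf_eq_of_isLeast_majorant hmin hVg hVg_sstar hg]
  exact one_le_four_mul_one_sub_iff hε₁ (by linarith) hμ₁

/-- Let `X` be a standardized 3-Dirac mixture with ordered locations
`μ₁ < μ₂ < μ₃` and probabilities `ε₁, ε₂, ε₃ > 0` summing to `1`, and let `s⋆` be the smallest
minimizer of `s ↦ Var |X - s|`; assume `s⋆ ∈ [μ₁, μ₂]`. Then
`Φ⋆(X) = 4 · min_{s ∈ ℝ} Var |X - s| ≥ 1` if and only if
`μ₁ ≥ F(ε₁) = -(√3/2) √((1 - ε₁)/ε₁)`. -/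
theorem stmt_17 (ε₁ ε₂ ε₃ μ₁ μ₂ μ₃ : ℝ)
    (hε₁ : 0 < ε₁) (hε₂ : 0 < ε₂) (hε₃ : 0 < ε₃) (hsum : ε₁ + ε₂ + ε₃ = 1)
    (h12 : μ₁ < μ₂) (h23 : μ₂ < μ₃)
    (P : Measure ℝ)
    (hP : P = ENNReal.ofReal ε₁ • Measure.dirac μ₁ + ENNReal.ofReal ε₂ • Measure.dirac μ₂ +
      ENNReal.ofReal ε₃ • Measure.dirac μ₃)
    (hmean : ∫ x, x ∂P = 0) (hm2 : ∫ x, x ^ 2 ∂P = 1)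
    (sstar : ℝ)
    (hmin : ∀ s : ℝ, variance (fun x => |x - sstar|) P ≤ variance (fun x => |x - s|) P)
    (hleast : ∀ t : ℝ,
      (∀ s : ℝ, variance (fun x => |x - t|) P ≤ variance (fun x => |x - s|) P) → sstar ≤ t)
    (hmem : sstar ∈ Set.Icc μ₁ μ₂) :
    1 ≤ 4 * (⨅ s : ℝ, variance (fun x => |x - s|) P) ↔
      -(Real.sqrt 3 / 2) * Real.sqrt ((1 - ε₁) / ε₁) ≤ μ₁ :=
  stmt_17_general ε₁ ε₂ ε₃ μ₁ μ₂ μ₃ hε₁ hε₂ hε₃ hsum h23 P hP hmean hm2 sstar hmin hmem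
end
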